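/- arXiv:1211.4229 — 10 statements merged into one kernel-verified Lean document; each statement's English description precedes it below -/
import Mathlib

section
/- Let G be a graph with induced subgraphs G₁, G₂ such that G₁ ∪ G₂ = G and V(G₁) ∩ V(G₂) induces a clique. Let a, b, c, d be positive integers with a/b ≥ c/d. If G₁ has an (a:b)-coloring and G₂ has a (c:d)-coloring, then G has an (as/b : s)-coloring, where s is the least common multiple of b and d. -/
/-- An `(a:b)`-coloring of `G`: each vertex gets a `b`-element subset of `{1,...,a}`
so that adjacent vertices receive disjoint sets. -/
def HasFracColoring {V : Type*} (G : SimpleGraph V) (a b : ℕ) : Prop :=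
  ∃ f : V → Finset (Fin a), (∀ v, (f v).card = b) ∧
    ∀ u v, G.Adj u v → Disjoint (f u) (f v)

open Finset in
lemma key_inj {α β ι : Type*} [Fintype α] [Fintype β] [DecidableEq α] [DecidableEq β]
    (K : Finset ι) (p : ι → Finset α) (q : ι → Finset β)
    (hp : ∀ u ∈ K, ∀ v ∈ K, u ≠ v → Disjoint (p u) (p v))
    (hq : ∀ u ∈ K, ∀ v ∈ K, u ≠ v → Disjoint (q u) (q v))
    (hcard : ∀ u ∈ K, (p u).card = (q u).card)
    (hle : Fintype.card α ≤ Fintype.card β) :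
    ∃ φ : α → β, Function.Injective φ ∧ ∀ u ∈ K, ∀ x ∈ p u, φ x ∈ q u := by
  classical
  rcases isEmpty_or_nonempty α with hα | hα
  · exact ⟨fun x => (hα.elim x), fun x => (hα.elim x), fun u hu x hx => (hα.elim x)⟩
  have hβ : Nonempty β := by
    rcases isEmpty_or_nonempty β with hβ' | hβ'
    · exfalso
      have h0 : Fintype.card β = 0 := Fintype.card_eq_zero
      have h1 : 0 < Fintype.card α := Fintype.card_pos
      omega
    · exact hβ'
  set P := K.biUnion p with hPdef
  set Q := K.biUnion q with hQdef
  have hPQ : P.card = Q.card := by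
    rw [hPdef, hQdef, Finset.card_biUnion hp, Finset.card_biUnion hq]
    exact Finset.sum_congr rfl hcard
  have hQle : Q.card ≤ Fintype.card β := by
    simpa using Finset.card_le_card (Finset.subset_univ Q)
  have h1 : ((univ : Finset α) \ P).card ≤ ((univ : Finset β) \ Q).card := by
    rw [Finset.card_sdiff_of_subset (Finset.subset_univ _), Finset.card_sdiff_of_subset (Finset.subset_univ _),
      Finset.card_univ, Finset.card_univ, hPQ]
    omega
  let ψ : {x // x ∈ (univ : Finset α) \ P} → {y // y ∈ (univ : Finset β) \ Q} :=
    fun x => ((univ \ Q).equivFin).symm (Fin.castLE h1 (((univ \ P).equivFin) x))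
  have hψ : Function.Injective ψ := by
    intro x y h
    apply ((univ \ P).equivFin).injective
    apply Fin.castLE_injective h1
    exact ((univ \ Q).equivFin).symm.injective h
  let E : ι → α → β := fun u x =>
    if h : u ∈ K ∧ x ∈ p u then ((Finset.equivOfCardEq (hcard u h.1)) ⟨x, h.2⟩ : β)
    else Classical.arbitrary β
  have hEmem : ∀ u x (hu : u ∈ K) (hx : x ∈ p u), E u x ∈ q u := by
    intro u x hu hx
    simp only [E, dif_pos (And.intro hu hx)]
    exact ((Finset.equivOfCardEq (hcard u hu)) ⟨x, hx⟩).2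
  have hEinj : ∀ u x y (hu : u ∈ K) (hx : x ∈ p u) (hy : y ∈ p u), E u x = E u y → x = y := by
    intro u x y hu hx hy h
    simp only [E, dif_pos (And.intro hu hx), dif_pos (And.intro hu hy)] at h
    have := (Finset.equivOfCardEq (hcard u hu)).injective (Subtype.ext h)
    exact congrArg Subtype.val this
  have hmem : ∀ x, x ∈ P → ∃ u, u ∈ K ∧ x ∈ p u := by
    intro x hx
    simpa using Finset.mem_biUnion.mp hx
  refine ⟨fun x => if h : x ∈ P then E (hmem x h).choose x
    else (ψ ⟨x, by simp [h]⟩ : β), ?_, ?_⟩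
  · have key2 : ∀ u ∈ K, ∀ y, y ∈ q u → y ∈ Q := by
      intro u hu y hy
      exact Finset.mem_biUnion.mpr ⟨u, hu, hy⟩
    intro x y hxy
    by_cases hx : x ∈ P <;> by_cases hy : y ∈ P
    · simp only [dif_pos hx, dif_pos hy] at hxy
      obtain ⟨hKx, hpx⟩ := (hmem x hx).choose_spec
      obtain ⟨hKy, hpy⟩ := (hmem y hy).choose_spec
      have huv : (hmem x hx).choose = (hmem y hy).choose := by
        by_contra hne
        have hdisj := hq _ hKx _ hKy hne
        have h1' := hEmem _ x hKx hpx
        have h2' := hEmem _ y hKy hpy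
        rw [hxy] at h1'
        exact Finset.disjoint_left.mp hdisj h1' h2'
      rw [← huv] at hxy hpy
      exact hEinj _ x y hKx hpx hpy hxy
    · exfalso
      simp only [dif_pos hx, dif_neg hy] at hxy
      obtain ⟨hKx, hpx⟩ := (hmem x hx).choose_spec
      have h1' := hEmem _ x hKx hpx
      rw [hxy] at h1'
      have h2' : (ψ ⟨y, by simp [hy]⟩ : β) ∈ (univ : Finset β) \ Q := (ψ ⟨y, by simp [hy]⟩).2
      rw [Finset.mem_sdiff] at h2'
      exact h2'.2 (key2 _ hKx _ h1')
    · exfalso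
      simp only [dif_neg hx, dif_pos hy] at hxy
      obtain ⟨hKy, hpy⟩ := (hmem y hy).choose_spec
      have h1' := hEmem _ y hKy hpy
      rw [← hxy] at h1'
      have h2' : (ψ ⟨x, by simp [hx]⟩ : β) ∈ (univ : Finset β) \ Q := (ψ ⟨x, by simp [hx]⟩).2
      rw [Finset.mem_sdiff] at h2'
      exact h2'.2 (key2 _ hKy _ h1')
    · simp only [dif_neg hx, dif_neg hy] at hxy
      exact congrArg Subtype.val (hψ (Subtype.ext hxy))
  · intro u hu x hx
    have hxP : x ∈ P := Finset.mem_biUnion.mpr ⟨u, hu, hx⟩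
    simp only [dif_pos hxP]
    obtain ⟨hK1, hp1⟩ := (hmem x hxP).choose_spec
    have huv : (hmem x hxP).choose = u := by
      by_contra hne
      exact Finset.disjoint_left.mp (hp _ hK1 _ hu hne) hp1 hx
    rw [huv] at hK1 hp1 ⊢
    exact hEmem u x hK1 hp1

lemma prod_disjoint {γ δ : Type*} {S T : Finset γ} (U : Finset δ) (h : Disjoint S T) :
    Disjoint (S ×ˢ U) (T ×ˢ U) := by
  rw [Finset.disjoint_left] at *
  intro x hx hx'
  exact h (Finset.mem_product.mp hx).1 (Finset.mem_product.mp hx').1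

/-- Let `G₁, G₂` be induced subgraphs of `G` (on vertex sets `s₁, s₂`) such that
`G₁ ∪ G₂ = G` and `V(G₁) ∩ V(G₂)` is a clique. If `a/b ≥ c/d`, `G₁` has an
`(a:b)`-coloring and `G₂` has a `(c:d)`-coloring, then `G` has an `(as/b : s)`-coloring
where `s = lcm(b,d)`. -/
theorem hasFracColoring_of_clique_glue {V : Type*} (G : SimpleGraph V)
    (s₁ s₂ : Set V) (hunion : s₁ ∪ s₂ = Set.univ)
    (hedges : ∀ x y, G.Adj x y → (x ∈ s₁ ∧ y ∈ s₁) ∨ (x ∈ s₂ ∧ y ∈ s₂))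
    (hclique : G.IsClique (s₁ ∩ s₂))
    (a b c d : ℕ) (ha : 0 < a) (hb : 0 < b) (hc : 0 < c) (hd : 0 < d)
    (hratio : (c : ℚ) / d ≤ (a : ℚ) / b)
    (h1 : HasFracColoring (G.induce s₁) a b)
    (h2 : HasFracColoring (G.induce s₂) c d) :
    HasFracColoring G (a * (Nat.lcm b d / b)) (Nat.lcm b d) := by
  classical
  obtain ⟨f₁, hf₁card, hf₁adj⟩ := h1
  obtain ⟨f₂, hf₂card, hf₂adj⟩ := h2
  set m := Nat.lcm b d / b with hm
  set n := Nat.lcm b d / d with hn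
  have hbm : b * m = Nat.lcm b d := Nat.mul_div_cancel' (Nat.dvd_lcm_left b d)
  have hdn : d * n = Nat.lcm b d := Nat.mul_div_cancel' (Nat.dvd_lcm_right b d)
  have hcb : c * b ≤ a * d := by
    have h' := (div_le_div_iff₀ (by positivity) (by positivity)).mp hratio
    exact_mod_cast h'
  have hcn_am : c * n ≤ a * m := by
    have h' : d * (c * n) ≤ d * (a * m) := by
      calc d * (c * n) = c * (d * n) := by ring
        _ = c * (b * m) := by rw [hdn, hbm]
        _ = (c * b) * m := by ring
        _ ≤ (a * d) * m := Nat.mul_le_mul_right _ hcb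
        _ = d * (a * m) := by ring
    exact Nat.le_of_mul_le_mul_left h' hd
  have hadj1 : ∀ u v (hu : u ∈ s₁) (hv : v ∈ s₁), G.Adj u v →
      Disjoint (f₁ ⟨u,hu⟩) (f₁ ⟨v,hv⟩) :=
    fun u v hu hv h => hf₁adj ⟨u,hu⟩ ⟨v,hv⟩ (by simpa [SimpleGraph.comap_adj] using h)
  have hadj2 : ∀ u v (hu : u ∈ s₂) (hv : v ∈ s₂), G.Adj u v →
      Disjoint (f₂ ⟨u,hu⟩) (f₂ ⟨v,hv⟩) :=
    fun u v hu hv h => hf₂adj ⟨u,hu⟩ ⟨v,hv⟩ (by simpa [SimpleGraph.comap_adj] using h)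
  have hmem2 : ∀ v : V, v ∉ s₁ → v ∈ s₂ := by
    intro v hv
    have hv' : v ∈ s₁ ∪ s₂ := by rw [hunion]; trivial
    rcases hv' with h | h
    · exact absurd h hv
    · exact h
  -- K is finite
  have hKfin : (s₁ ∩ s₂).Finite := by
    rw [← Set.finite_coe_iff]
    have hinj : Function.Injective (fun u : ↥(s₁ ∩ s₂) => f₂ ⟨u.1, u.2.2⟩) := by
      intro u v h
      by_contra hne
      have hne' : (u : V) ≠ v := fun h' => hne (Subtype.ext h')
      have hadj := hclique u.2 v.2 hne'
      have h' : f₂ ⟨u.1, u.2.2⟩ = f₂ ⟨v.1, v.2.2⟩ := h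
      have hdisj := hadj2 u v u.2.2 v.2.2 hadj
      rw [h'] at hdisj
      have hempty : f₂ ⟨v.1, v.2.2⟩ = ∅ := by
        simpa using disjoint_self.mp hdisj
      have hcard' := hf₂card ⟨v.1, v.2.2⟩
      rw [hempty] at hcard'
      simp at hcard'
      omega
    exact Finite.of_injective _ hinj
  set KF := hKfin.toFinset with hKFdef
  have hKFmem : ∀ u, u ∈ KF ↔ u ∈ s₁ ∩ s₂ := fun u => Set.Finite.mem_toFinset hKfin
  -- pieces for key_inj
  set p : V → Finset (Fin c × Fin n) := fun u =>
    if h : u ∈ s₂ then (f₂ ⟨u,h⟩) ×ˢ (Finset.univ : Finset (Fin n)) else ∅ with hpdef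
  set q : V → Finset (Fin a × Fin m) := fun u =>
    if h : u ∈ s₁ then (f₁ ⟨u,h⟩) ×ˢ (Finset.univ : Finset (Fin m)) else ∅ with hqdef
  have hp : ∀ u ∈ KF, ∀ v ∈ KF, u ≠ v → Disjoint (p u) (p v) := by
    intro u hu v hv hne
    rw [hKFmem] at hu hv
    simp only [hpdef, dif_pos hu.2, dif_pos hv.2]
    exact prod_disjoint _ (hadj2 u v hu.2 hv.2 (hclique hu hv hne))
  have hq : ∀ u ∈ KF, ∀ v ∈ KF, u ≠ v → Disjoint (q u) (q v) := by
    intro u hu v hv hne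
    rw [hKFmem] at hu hv
    simp only [hqdef, dif_pos hu.1, dif_pos hv.1]
    exact prod_disjoint _ (hadj1 u v hu.1 hv.1 (hclique hu hv hne))
  have hpcard : ∀ u (h : u ∈ s₂), (p u).card = Nat.lcm b d := by
    intro u h
    simp only [hpdef, dif_pos h]
    rw [Finset.card_product, hf₂card, Finset.card_univ, Fintype.card_fin]
    exact hdn
  have hqcard : ∀ u (h : u ∈ s₁), (q u).card = Nat.lcm b d := by
    intro u h
    simp only [hqdef, dif_pos h]
    rw [Finset.card_product, hf₁card, Finset.card_univ, Fintype.card_fin]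
    exact hbm
  have hcard : ∀ u ∈ KF, (p u).card = (q u).card := by
    intro u hu
    rw [hKFmem] at hu
    rw [hpcard u hu.2, hqcard u hu.1]
  have hle : Fintype.card (Fin c × Fin n) ≤ Fintype.card (Fin a × Fin m) := by
    simpa [Fintype.card_prod, Fintype.card_fin] using hcn_am
  obtain ⟨φ, hφinj, hφmap⟩ := key_inj KF p q hp hq hcard hle
  -- image of p u equals q u for u in the clique
  have himg : ∀ u (hu : u ∈ s₁ ∩ s₂), (p u).image φ = q u := by
    intro u hu
    apply Finset.eq_of_subset_of_card_le
    · intro y hy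
      obtain ⟨x, hx, rfl⟩ := Finset.mem_image.mp hy
      exact hφmap u ((hKFmem u).mpr hu) x hx
    · rw [Finset.card_image_of_injective _ hφinj, hpcard u hu.2, hqcard u hu.1]
  -- the coloring
  set F : V → Finset (Fin a × Fin m) := fun v =>
    if h : v ∈ s₁ then (f₁ ⟨v,h⟩) ×ˢ (Finset.univ : Finset (Fin m))
    else ((f₂ ⟨v, hmem2 v h⟩) ×ˢ (Finset.univ : Finset (Fin n))).image φ with hFdef
  refine ⟨fun v => (F v).map (finProdFinEquiv).toEmbedding, ?_, ?_⟩
  · intro v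
    rw [Finset.card_map]
    by_cases h : v ∈ s₁
    · simp only [hFdef, dif_pos h]
      rw [Finset.card_product, hf₁card, Finset.card_univ, Fintype.card_fin]
      exact hbm
    · simp only [hFdef, dif_neg h]
      rw [Finset.card_image_of_injective _ hφinj, Finset.card_product, hf₂card,
        Finset.card_univ, Fintype.card_fin]
      exact hdn
  · intro u v hadj
    rw [Finset.disjoint_map]
    -- mixed case helper
    have mixed : ∀ u v (hu : u ∈ s₁) (hv : v ∉ s₁), G.Adj u v →
        Disjoint ((f₁ ⟨u,hu⟩) ×ˢ (Finset.univ : Finset (Fin m)))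
          (((f₂ ⟨v, hmem2 v hv⟩) ×ˢ (Finset.univ : Finset (Fin n))).image φ) := by
      intro u v hu hv hadj
      have hv2 : v ∈ s₂ := hmem2 v hv
      have hu2 : u ∈ s₂ := by
        rcases hedges u v hadj with h | h
        · exact absurd h.2 hv
        · exact h.1
      have huK : u ∈ s₁ ∩ s₂ := ⟨hu, hu2⟩
      have h1 : (f₁ ⟨u,hu⟩) ×ˢ (Finset.univ : Finset (Fin m)) = (p u).image φ := by
        rw [himg u huK]
        simp only [hqdef, dif_pos hu]
      rw [h1]
      have hp' : p u = (f₂ ⟨u,hu2⟩) ×ˢ (Finset.univ : Finset (Fin n)) := by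
        simp only [hpdef, dif_pos hu2]
      rw [hp', Finset.disjoint_image hφinj]
      exact prod_disjoint _ (hadj2 u v hu2 hv2 hadj)
    by_cases hu : u ∈ s₁ <;> by_cases hv : v ∈ s₁
    · simp only [hFdef, dif_pos hu, dif_pos hv]
      exact prod_disjoint _ (hadj1 u v hu hv hadj)
    · simp only [hFdef, dif_pos hu, dif_neg hv]
      exact mixed u v hu hv hadj
    · simp only [hFdef, dif_neg hu, dif_pos hv]
      exact (mixed v u hv hu hadj.symm).symm
    · simp only [hFdef, dif_neg hu, dif_neg hv]
      rw [Finset.disjoint_image hφinj]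
      exact prod_disjoint _ (hadj2 u v (hmem2 u hu) (hmem2 v hv) hadj)
end

section
/- For every t > 0, every fractionally t-critical graph is 2-connected and has no vertex-cut inducing a clique. -/
/-- The fractional chromatic number. -/
noncomputable def fracChrom {V : Type*} (G : SimpleGraph V) : ℝ :=
  sInf {x : ℝ | ∃ a b : ℕ, 0 < a ∧ 0 < b ∧ HasFracColoring G a b ∧ x = (a : ℝ) / b}

/-- `S` is a vertex-cut of `G` if deleting `S` leaves a disconnected graph. -/
def IsVertexCut {V : Type*} (G : SimpleGraph V) (S : Set V) : Prop :=
  ¬ (G.induce (Sᶜ : Set V)).Preconnected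

/-- `G` is 2-connected: connected and no single vertex is a cut vertex. -/
def TwoConnected {V : Type*} (G : SimpleGraph V) : Prop :=
  G.Connected ∧ ∀ v : V, ¬ IsVertexCut G ({v} : Set V)

/-!
Suppose a clique `S` separates `G`: then `G` is the union of two proper induced subgraphs
`G[W₁]`, `G[W₂]` with `W₁ ∩ W₂ = S` and no edges between `W₁ \ W₂` and `W₂ \ W₁`. By criticality
both have fractional chromatic number below `χ_f(G)`, so after rescaling both have
`(a:b)`-colorings for one common pair with `a / b < χ_f(G)`. On the clique `S` each coloring uses
pairwise disjoint `b`-sets, so a permutation of the colors makes the two colorings agree on `S`,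
and they glue to an `(a:b)`-coloring of `G`, a contradiction. Connectivity and the absence of cut
vertices are the cases `S = ∅` and `S = {v}`; the empty graph is excluded by `t > 0`, since its
fractional chromatic number is `0`.
-/

open Finset Function SimpleGraph

section Coloring

variable {V W : Type*} {G : SimpleGraph V} {a b : ℕ}

lemma fracChrom_le_div (ha : 0 < a) (hb : 0 < b) (h : HasFracColoring G a b) :
    fracChrom G ≤ a / b :=
  csInf_le ⟨0, by rintro _ ⟨_, _, _, _, _, rfl⟩; positivity⟩ ⟨a, b, ha, hb, h, rfl⟩

lemma hasFracColoring_card_add_one [Finite V] (G : SimpleGraph V) :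
    HasFracColoring G (Nat.card V + 1) 1 := by
  refine ⟨fun v => {(Finite.equivFin V v).castSucc}, fun _ => rfl, fun u v huv => ?_⟩
  rw [disjoint_singleton, Ne, Fin.castSucc_inj, EmbeddingLike.apply_eq_iff_eq]
  exact huv.ne

lemma exists_hasFracColoring_div_lt [Finite V] {c : ℝ} (h : fracChrom G < c) :
    ∃ a b : ℕ, 0 < a ∧ 0 < b ∧ HasFracColoring G a b ∧ (a : ℝ) / b < c := by
  obtain ⟨_, ⟨a, b, ha, hb, hab, rfl⟩, hlt⟩ := exists_lt_of_csInf_lt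
    (by exact ⟨_, _, _, Nat.succ_pos _, one_pos, hasFracColoring_card_add_one G, rfl⟩) h
  exact ⟨a, b, ha, hb, hab, hlt⟩

lemma fracChrom_nonpos [IsEmpty V] (G : SimpleGraph V) : fracChrom G ≤ 0 := by
  refine le_of_forall_gt_imp_ge_of_dense fun c hc => ?_
  obtain ⟨n, hn⟩ := exists_nat_one_div_lt hc
  have hcol : HasFracColoring G 1 (n + 1) := ⟨isEmptyElim, isEmptyElim, isEmptyElim⟩
  calc fracChrom G ≤ (1 : ℕ) / (n + 1 : ℕ) := fracChrom_le_div one_pos n.succ_pos hcol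
    _ ≤ c := by push_cast; exact hn.le

lemma HasFracColoring.mono {a' : ℕ} (h : HasFracColoring G a b) (ha : a ≤ a') :
    HasFracColoring G a' b := by
  obtain ⟨f, hcard, hdisj⟩ := h
  exact ⟨fun v => (f v).map (Fin.castLEEmb ha), fun v => by simp [hcard],
    fun u v huv => disjoint_map _ |>.mpr (hdisj u v huv)⟩

lemma HasFracColoring.mul (h : HasFracColoring G a b) (k : ℕ) :
    HasFracColoring G (a * k) (b * k) := by
  obtain ⟨f, hcard, hdisj⟩ := h
  exact ⟨fun v => (f v ×ˢ univ).map finProdFinEquiv.toEmbedding, fun v => by simp [hcard],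
    fun u v huv => disjoint_map _ |>.mpr (disjoint_product.mpr (.inl (hdisj u v huv)))⟩

lemma exists_hasFracColoring_div_lt₂ [Finite V] [Finite W] {H : SimpleGraph W} {c : ℝ}
    (hG : fracChrom G < c) (hH : fracChrom H < c) :
    ∃ a b : ℕ, 0 < a ∧ 0 < b ∧ HasFracColoring G a b ∧ HasFracColoring H a b ∧
      (a : ℝ) / b < c := by
  obtain ⟨a₁, b₁, ha₁, hb₁, hG, hlt₁⟩ := exists_hasFracColoring_div_lt hG
  obtain ⟨a₂, b₂, ha₂, hb₂, hH, hlt₂⟩ := exists_hasFracColoring_div_lt hH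
  refine ⟨max (a₁ * b₂) (a₂ * b₁), b₁ * b₂, by positivity, by positivity,
    (hG.mul b₂).mono (le_max_left _ _), mul_comm b₂ b₁ ▸ (hH.mul b₁).mono (le_max_right _ _),
    ?_⟩
  have hb₁' : (0 : ℝ) < b₁ := by positivity
  have hb₂' : (0 : ℝ) < b₂ := by positivity
  rw [div_lt_iff₀ hb₁'] at hlt₁
  rw [div_lt_iff₀ hb₂'] at hlt₂
  rw [div_lt_iff₀ (by positivity)]
  push_cast
  exact max_lt (by nlinarith) (by nlinarith)

end Coloring

lemma Finset.exists_perm_image_eq {ι α : Type*} [Finite α] [DecidableEq α]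
    {s t : ι → Finset α} (hs : Pairwise (Disjoint on s)) (ht : Pairwise (Disjoint on t))
    (hcard : ∀ i, #(s i) = #(t i)) : ∃ σ : Equiv.Perm α, ∀ i, (s i).image σ = t i := by
  classical
  have hs' : Pairwise (Disjoint on (fun i => (s i : Set α))) :=
    fun i j hij => disjoint_coe.2 (hs hij)
  have ht' : Pairwise (Disjoint on (fun i => (t i : Set α))) :=
    fun i j hij => disjoint_coe.2 (ht hij)
  have := Fintype.ofFinite α
  let es i : (s i : Set α) ≃ (t i : Set α) := Fintype.equivOfCardEq (by simpa using hcard i)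
  let e : (⋃ i, (s i : Set α)) ≃ ⋃ i, (t i : Set α) :=
    (Set.unionEqSigmaOfDisjoint hs').trans <|
      (Equiv.sigmaCongrRight es).trans (Set.unionEqSigmaOfDisjoint ht').symm
  refine ⟨e.extendSubtype, fun i => eq_of_subset_of_card_le ?_ ?_⟩
  · refine image_subset_iff.2 fun x hx => ?_
    have hx' : x ∈ ⋃ i, (s i : Set α) := Set.mem_iUnion.2 ⟨i, hx⟩
    rw [Equiv.extendSubtype_apply_of_mem e x hx']
    set p := Set.unionEqSigmaOfDisjoint hs' ⟨x, hx'⟩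
    have hpx : (p.2 : α) = x := Set.coe_snd_unionEqSigmaOfDisjoint hs' _
    have hpi : p.1 = i := hs'.eq <| Set.not_disjoint_iff.2 ⟨x, hpx ▸ p.2.2, hx⟩
    exact hpi ▸ (es p.1 p.2).2
  · rw [card_image_of_injective _ e.extendSubtype.injective, hcard]

section Gluing

variable {V : Type*} {G : SimpleGraph V} {a b : ℕ} {f g : V → Finset (Fin a)}
  {W₁ W₂ : Set V}

def IsFracColoringOn (G : SimpleGraph V) (W : Set V) (b : ℕ) (f : V → Finset (Fin a)) : Prop :=
  (∀ v ∈ W, #(f v) = b) ∧ ∀ u ∈ W, ∀ v ∈ W, G.Adj u v → Disjoint (f u) (f v)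

lemma HasFracColoring.exists_isFracColoringOn {W : Set V}
    (h : HasFracColoring ((⊤ : G.Subgraph).induce W).coe a b) :
    ∃ f : V → Finset (Fin a), IsFracColoringOn G W b f := by
  classical
  obtain ⟨f, hcard, hdisj⟩ := h
  refine ⟨fun v => if hv : v ∈ W then f ⟨v, hv⟩ else ∅, fun v hv => by simp [hv, hcard],
    fun u hu v hv huv => ?_⟩
  simpa [hu, hv] using hdisj ⟨u, hu⟩ ⟨v, hv⟩ ⟨hu, hv, huv⟩

lemma IsFracColoringOn.hasFracColoring (h : IsFracColoringOn G Set.univ b f) :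
    HasFracColoring G a b :=
  ⟨f, fun v => h.1 v trivial, fun u v => h.2 u trivial v trivial⟩

lemma IsFracColoringOn.image_perm {W : Set V} (h : IsFracColoringOn G W b f)
    (σ : Equiv.Perm (Fin a)) : IsFracColoringOn G W b fun v => (f v).image σ :=
  ⟨fun v hv => (card_image_of_injective _ σ.injective).trans (h.1 v hv),
    fun u hu v hv huv => (disjoint_image σ.injective).2 (h.2 u hu v hv huv)⟩

lemma IsFracColoringOn.exists_perm_eqOn (hf : IsFracColoringOn G W₁ b f)
    (hg : IsFracColoringOn G W₂ b g) (hS : G.IsClique (W₁ ∩ W₂)) :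
    ∃ σ : Equiv.Perm (Fin a), Set.EqOn f (fun v => (g v).image σ) (W₁ ∩ W₂) := by
  obtain ⟨σ, hσ⟩ := Finset.exists_perm_image_eq (s := fun v : ↥(W₁ ∩ W₂) => g v)
    (t := fun v => f v)
    (fun x y hxy => hg.2 x x.2.2 y y.2.2 (hS x.2 y.2 (Subtype.coe_ne_coe.2 hxy)))
    (fun x y hxy => hf.2 x x.2.1 y y.2.1 (hS x.2 y.2 (Subtype.coe_ne_coe.2 hxy)))
    (fun x => (hg.1 x x.2.2).trans (hf.1 x x.2.1).symm)
  exact ⟨σ, fun v hv => (hσ ⟨v, hv⟩).symm⟩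

lemma IsFracColoringOn.piecewise [DecidablePred (· ∈ W₁)] (hf : IsFracColoringOn G W₁ b f)
    (hg : IsFracColoringOn G W₂ b g) (hfg : Set.EqOn f g (W₁ ∩ W₂))
    (hsep : ∀ x ∉ W₂, ∀ y ∉ W₁, ¬ G.Adj x y) :
    IsFracColoringOn G (W₁ ∪ W₂) b (W₁.piecewise f g) := by
  have hpf : Set.EqOn (W₁.piecewise f g) f W₁ := fun v hv => Set.piecewise_eq_of_mem _ _ _ hv
  have hpg : Set.EqOn (W₁.piecewise f g) g W₂ := fun v hv => by
    by_cases hv₁ : v ∈ W₁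
    · rw [hpf hv₁, hfg ⟨hv₁, hv⟩]
    · exact Set.piecewise_eq_of_notMem _ _ _ hv₁
  refine ⟨fun v hv => hv.elim (fun hv => hpf hv ▸ hf.1 v hv) (fun hv => hpg hv ▸ hg.1 v hv),
    fun u hu v hv huv => ?_⟩
  by_cases h₂ : u ∈ W₂ ∧ v ∈ W₂
  · rw [hpg h₂.1, hpg h₂.2]
    exact hg.2 u h₂.1 v h₂.2 huv
  · have h₁ : u ∈ W₁ ∧ v ∈ W₁ := by
      rcases not_and_or.1 h₂ with hu₂ | hv₂
      · exact ⟨hu.resolve_right hu₂, by_contra fun hv₁ => hsep u hu₂ v hv₁ huv⟩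
      · exact ⟨by_contra fun hu₁ => hsep v hv₂ u hu₁ huv.symm, hv.resolve_right hv₂⟩
    rw [hpf h₁.1, hpf h₁.2]
    exact hf.2 u h₁.1 v h₁.2 huv

lemma fracChrom_le_max_of_isClique_inter [Finite V] (hcover : W₁ ∪ W₂ = Set.univ)
    (hsep : ∀ x ∉ W₂, ∀ y ∉ W₁, ¬ G.Adj x y) (hS : G.IsClique (W₁ ∩ W₂)) :
    fracChrom G ≤ max (fracChrom ((⊤ : G.Subgraph).induce W₁).coe)
      (fracChrom ((⊤ : G.Subgraph).induce W₂).coe) := by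
  classical
  refine le_of_forall_gt_imp_ge_of_dense fun c hc => ?_
  obtain ⟨a, b, ha, hb, h₁, h₂, hlt⟩ :=
    exists_hasFracColoring_div_lt₂ (max_lt_iff.1 hc).1 (max_lt_iff.1 hc).2
  obtain ⟨f, hf⟩ := h₁.exists_isFracColoringOn
  obtain ⟨g, hg⟩ := h₂.exists_isFracColoringOn
  obtain ⟨σ, hσ⟩ := hf.exists_perm_eqOn hg hS
  have hglued := hf.piecewise (hg.image_perm σ) hσ hsep
  rw [hcover] at hglued
  exact (fracChrom_le_div ha hb hglued.hasFracColoring).trans hlt.le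

end Gluing

section VertexCut

variable {V : Type*} {G : SimpleGraph V}

lemma IsVertexCut.exists_separation {S : Set V} (h : IsVertexCut G S) :
    ∃ W₁ W₂ : Set V, W₁ ≠ Set.univ ∧ W₂ ≠ Set.univ ∧ W₁ ∪ W₂ = Set.univ ∧ W₁ ∩ W₂ = S ∧
      ∀ x ∉ W₂, ∀ y ∉ W₁, ¬ G.Adj x y := by
  obtain ⟨u, w, huw⟩ : ∃ u w, ¬ (G.induce Sᶜ).Reachable u w := by
    simpa [IsVertexCut, Preconnected] using h
  set A := Subtype.val '' {x | (G.induce Sᶜ).Reachable u x}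
  have hAS : A ⊆ Sᶜ := by
    rintro _ ⟨x, -, rfl⟩
    exact x.2
  refine ⟨A ∪ S, Aᶜ, (Set.ne_univ_iff_exists_notMem _).2 ⟨w, ?_⟩,
    (Set.ne_univ_iff_exists_notMem _).2 ⟨u, fun hu => hu ⟨u, .rfl, rfl⟩⟩,
    by rw [Set.union_right_comm, Set.union_compl_self, Set.univ_union], ?_, ?_⟩
  · rintro (⟨w', hw', hw⟩ | hw)
    · exact huw (Subtype.ext hw ▸ hw')
    · exact w.2 hw
  · rw [Set.union_inter_distrib_right, Set.inter_compl_self, Set.empty_union,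
      Set.inter_eq_left]
    exact Set.subset_compl_comm.1 hAS
  · rintro _ hx y hy hxy
    obtain ⟨x, hux, rfl⟩ := not_not.1 hx
    have hyS : y ∈ Sᶜ := fun hyS => hy (.inr hyS)
    exact hy (.inl ⟨⟨y, hyS⟩, hux.trans (induce_adj.2 hxy).reachable, rfl⟩)

lemma isVertexCut_empty_iff : IsVertexCut G ∅ ↔ ¬ G.Preconnected := by
  rw [IsVertexCut, Set.compl_empty, (induceUnivIso G).preconnected_iff]

lemma SimpleGraph.Subgraph.top_induce_ne_top {W : Set V} (hW : W ≠ Set.univ) :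
    (⊤ : G.Subgraph).induce W ≠ ⊤ :=
  fun h => hW (by simpa using congrArg Subgraph.verts h)

lemma not_isVertexCut_of_isClique [Finite V]
    (hcrit : ∀ W : Set V, W ≠ Set.univ →
      fracChrom ((⊤ : G.Subgraph).induce W).coe < fracChrom G)
    {S : Set V} (hS : G.IsClique S) : ¬ IsVertexCut G S := fun hcut => by
  obtain ⟨W₁, W₂, hW₁, hW₂, hcover, hinter, hsep⟩ := hcut.exists_separation
  exact (fracChrom_le_max_of_isClique_inter hcover hsep (hinter ▸ hS)).not_gt
    (max_lt (hcrit W₁ hW₁) (hcrit W₂ hW₂))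

end VertexCut

/-- For every `t > 0`, every fractionally `t`-critical graph is 2-connected and
has no vertex-cut inducing a clique. -/
theorem twoConnected_of_fractionally_critical {V : Type*} [Fintype V]
    (G : SimpleGraph V) (t : ℝ) (ht : 0 < t)
    (hgt : t < fracChrom G)
    (hsub : ∀ H : G.Subgraph, H ≠ ⊤ → fracChrom H.coe ≤ t) :
    TwoConnected G ∧ ¬ ∃ S : Set V, IsVertexCut G S ∧ G.IsClique S := by
  have hclique : ∀ S : Set V, G.IsClique S → ¬ IsVertexCut G S :=
    fun S => not_isVertexCut_of_isClique fun W hW =>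
      (hsub _ (Subgraph.top_induce_ne_top hW)).trans_lt hgt
  have : Nonempty V := not_isEmpty_iff.1 fun _ => (fracChrom_nonpos G).not_gt (ht.trans hgt)
  have hpre : G.Preconnected :=
    not_not.1 fun h => hclique ∅ isClique_empty (isVertexCut_empty_iff.2 h)
  exact ⟨⟨⟨hpre⟩, fun v => hclique {v} (isClique_singleton v)⟩,
    fun ⟨S, hcut, hS⟩ => hclique S hS hcut⟩
end

section
/- Let G be a graph with an (8:3)-coloring f, and let u, v be distinct vertices of G. If f(u) ≠ f(v), then f can be extended to an (8:3)-coloring of the graph H' obtained from G by adding two new vertices y, z and the three edges uy, yz, zv. -/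
/-- The graph obtained from `G` by adding two new vertices `y = inr 0`, `z = inr 1`
and the three edges `uy`, `yz`, `zv`. -/
def addPathTwo {V : Type*} (G : SimpleGraph V) (u v : V) : SimpleGraph (V ⊕ Fin 2) :=
  SimpleGraph.fromRel (fun a b =>
    (∃ a' b', a = Sum.inl a' ∧ b = Sum.inl b' ∧ G.Adj a' b') ∨
    (a = Sum.inl u ∧ b = Sum.inr 0) ∨
    (a = Sum.inr 0 ∧ b = Sum.inr 1) ∨
    (a = Sum.inr 1 ∧ b = Sum.inl v))

/-- If `f` is an `(8:3)`-coloring of `G` and `f u ≠ f v` for distinct `u, v`, then `f`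
extends to an `(8:3)`-coloring of the graph obtained by adding two new vertices `y, z`
and the edges `uy`, `yz`, `zv`. -/
theorem extend_83_coloring_new_path {V : Type*} (G : SimpleGraph V)
    (f : V → Finset (Fin 8)) (hcard : ∀ w, (f w).card = 3)
    (hproper : ∀ x y, G.Adj x y → Disjoint (f x) (f y))
    (u v : V) (huv : u ≠ v) (hne : f u ≠ f v) :
    ∃ g : V ⊕ Fin 2 → Finset (Fin 8),
      (∀ w : V, g (Sum.inl w) = f w) ∧ (∀ w, (g w).card = 3) ∧
      ∀ x y, (addPathTwo G u v).Adj x y → Disjoint (g x) (g y) := by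
  classical
  -- A = complement of f u, B = complement of f v
  set A : Finset (Fin 8) := (f u)ᶜ with hA
  set B : Finset (Fin 8) := (f v)ᶜ with hB
  have hAcard : A.card = 5 := by
    simp [hA, Finset.card_compl, hcard u]
  have hBcard : B.card = 5 := by
    simp [hB, Finset.card_compl, hcard v]
  -- there is an element of f u not in f v
  have hex : ∃ b, b ∈ f u ∧ b ∉ f v := by
    by_contra h
    push_neg at h
    exact hne (Finset.eq_of_subset_of_card_le (fun x hx => h x hx)
      (by rw [hcard u, hcard v]))
  obtain ⟨b, hbfu, hbfv⟩ := hex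
  have hbB : b ∈ B := by simp [hB, hbfv]
  have hbA : b ∉ A := by simp [hA, hbfu]
  -- pick two more elements of B for z
  have h2 : 2 ≤ (B.erase b).card := by
    rw [Finset.card_erase_of_mem hbB, hBcard]
    omega
  obtain ⟨t, htsub, htcard⟩ := Finset.exists_subset_card_eq h2
  set z : Finset (Fin 8) := insert b t with hz
  have hbt : b ∉ t := fun h => (Finset.mem_erase.mp (htsub h)).1 rfl
  have hzcard : z.card = 3 := by
    rw [hz, Finset.card_insert_of_notMem hbt, htcard]
  have hzB : z ⊆ B := by
    intro x hx
    rcases Finset.mem_insert.mp hx with h | h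
    · exact h ▸ hbB
    · exact (Finset.mem_erase.mp (htsub h)).2
  -- A \ z has at least 3 elements
  have hAz : A \ z = A \ t := by
    rw [hz]
    ext x
    simp only [Finset.mem_sdiff, Finset.mem_insert]
    constructor
    · rintro ⟨hx, h⟩; exact ⟨hx, fun h' => h (Or.inr h')⟩
    · rintro ⟨hx, h⟩
      refine ⟨hx, ?_⟩
      rintro (rfl | h')
      · exact hbA hx
      · exact h h'
  have h3 : 3 ≤ (A \ z).card := by
    rw [hAz]
    have h' : A.card ≤ (A \ t).card + t.card := Finset.card_le_card_sdiff_add_card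
    omega
  obtain ⟨y, hysub, hycard⟩ := Finset.exists_subset_card_eq h3
  refine ⟨Sum.elim f (fun i => if i = 0 then y else z), fun w => rfl, ?_, ?_⟩
  · rintro (w | i)
    · exact hcard w
    · fin_cases i <;> simp [hycard, hzcard]
  · -- disjointness facts
    have hyz : Disjoint y z := by
      refine Finset.disjoint_left.mpr fun x hx hx' => ?_
      exact (Finset.mem_sdiff.mp (hysub hx)).2 hx'
    have hyu : Disjoint (f u) y := by
      refine Finset.disjoint_left.mpr fun x hx hx' => ?_
      have := (Finset.mem_sdiff.mp (hysub hx')).1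
      rw [hA, Finset.mem_compl] at this
      exact this hx
    have hzv : Disjoint z (f v) := by
      refine Finset.disjoint_left.mpr fun x hx hx' => ?_
      have := hzB hx
      rw [hB, Finset.mem_compl] at this
      exact this hx'
    rintro a c hadj
    rw [addPathTwo, SimpleGraph.fromRel_adj] at hadj
    obtain ⟨hne', h | h⟩ := hadj <;>
    · rcases h with ⟨a', b', rfl, rfl, hab⟩ | ⟨rfl, rfl⟩ | ⟨rfl, rfl⟩ | ⟨rfl, rfl⟩ <;>
        simp only [Sum.elim_inl, Sum.elim_inr, if_pos rfl] <;>
        first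
          | exact hproper _ _ hab
          | exact (hproper _ _ hab).symm
          | exact hyu
          | exact hyu.symm
          | exact hzv
          | exact hzv.symm
          | simpa using hyz
          | simpa using hyz.symm
end

section
/- Let D be a digraph with no directed cycle of odd length, let r : V(D) → ℕ be a function, and for each vertex v let S(v) be a finite set with |S(v)| ≥ r(v) + Σ_{u ∈ N⁺(v)} r(u), where N⁺(v) is the set of out-neighbors of v. Then there exist subsets C(v) ⊆ S(v) with |C(v)| = r(v) for all v, such that C(u) ∩ C(v) = ∅ whenever u and v are adjacent in D (joined by an arc in either direction). -/
section Walks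
variable {V : Type*} (A : V → V → Prop)

def WalkInD (X : Finset V) (x y : V) (n : ℕ) : Prop :=
  ∃ f : ℕ → V, f 0 = x ∧ f n = y ∧ (∀ i, i ≤ n → f i ∈ X) ∧
    ∀ i, i < n → A (f i) (f (i + 1))

def ReachInD (X : Finset V) (x y : V) : Prop := ∃ n, WalkInD A X x y n

variable {A}

lemma walkInD_refl {X : Finset V} {x : V} (hx : x ∈ X) : WalkInD A X x x 0 :=
  ⟨fun _ => x, rfl, rfl, fun _ _ => hx, fun i hi => absurd hi (Nat.not_lt_zero i)⟩

lemma walkInD_trans {X : Finset V} {x y z : V} {m n : ℕ}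
    (h1 : WalkInD A X x y m) (h2 : WalkInD A X y z n) : WalkInD A X x z (m + n) := by
  obtain ⟨f, hf0, hfm, hfX, hfA⟩ := h1
  obtain ⟨g, hg0, hgn, hgX, hgA⟩ := h2
  refine ⟨fun k => if k < m then f k else g (k - m), ?_, ?_, ?_, ?_⟩
  · by_cases h : 0 < m
    · simpa [h] using hf0
    · have hm : m = 0 := by omega
      subst hm
      simp only [Nat.lt_irrefl, if_false, Nat.sub_zero]
      rw [hg0, ← hfm, hf0]
  · have : ¬ m + n < m := by omega
    simp [this, hgn]
  · intro i hi
    by_cases h : i < m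
    · simpa [h] using hfX i (le_of_lt h)
    · simp only [h, if_false]
      exact hgX (i - m) (by omega)
  · intro i hi
    by_cases h : i < m
    · by_cases h2 : i + 1 < m
      · simpa [h, h2] using hfA i h
      · have him : i + 1 = m := by omega
        have : g (i + 1 - m) = f (i + 1) := by
          rw [him]; simp [hg0, ← hfm]
        simp only [h, if_true, h2, if_false, this]
        exact hfA i h
    · have h2 : ¬ i + 1 < m := by omega
      simp only [h, h2, if_false]
      have : i + 1 - m = (i - m) + 1 := by omega
      rw [this]
      exact hgA (i - m) (by omega)

lemma walkInD_extend {X : Finset V} {x y w : V} {n : ℕ}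
    (h : WalkInD A X x y n) (harc : A y w) (hw : w ∈ X) : WalkInD A X x w (n + 1) := by
  refine walkInD_trans h ⟨fun k => if k = 0 then y else w, by simp, by simp, ?_, ?_⟩
  · intro i hi
    by_cases h0 : i = 0
    · obtain ⟨f, hf0, hfn, hfX, -⟩ := h
      simp [h0, ← hfn, hfX n le_rfl]
    · simp [h0, hw]
  · intro i hi
    have : i = 0 := by omega
    simp [this, harc]

lemma reachInD_refl {X : Finset V} {x : V} (hx : x ∈ X) : ReachInD A X x x :=
  ⟨0, walkInD_refl hx⟩

lemma reachInD_trans {X : Finset V} {x y z : V}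
    (h1 : ReachInD A X x y) (h2 : ReachInD A X y z) : ReachInD A X x z := by
  obtain ⟨m, h1⟩ := h1; obtain ⟨n, h2⟩ := h2
  exact ⟨m + n, walkInD_trans h1 h2⟩

end Walks

section Kernel
variable {V : Type*} {A : V → V → Prop}

/-- Richardson's theorem: a finite digraph with no odd closed walk has a kernel
(on every vertex subset `X`). -/
lemma exists_kernel_of_no_odd_closed
    (hodd : ∀ n, Odd n → ∀ f : ℕ → V, f n = f 0 → (∀ i, i < n → A (f i) (f (i + 1))) → False)
    (X : Finset V) :
    ∃ K : Finset V, K ⊆ X ∧ (∀ u ∈ K, ∀ w ∈ K, ¬ A u w) ∧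
      ∀ u ∈ X, u ∉ K → ∃ w ∈ K, A u w := by
  classical
  induction X using Finset.strongInduction with
  | _ X ih =>
  rcases X.eq_empty_or_nonempty with rfl | ⟨v0, hv0⟩
  · exact ⟨∅, Finset.Subset.refl _, by simp, by simp⟩
  obtain ⟨v, hv, hmin⟩ :=
    X.exists_min_image (fun u => (X.filter (fun y => ReachInD A X u y)).card) ⟨v0, hv0⟩
  set T : Finset V := X.filter (fun y => ReachInD A X v y) with hT
  have hTX : T ⊆ X := Finset.filter_subset _ _
  have hvT : v ∈ T := Finset.mem_filter.2 ⟨hv, reachInD_refl hv⟩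
  have hTclosed : ∀ u ∈ T, ∀ w, A u w → w ∈ X → w ∈ T := by
    intro u hu w harc hwX
    obtain ⟨huX, n, hwalk⟩ := Finset.mem_filter.1 hu
    exact Finset.mem_filter.2 ⟨hwX, n + 1, walkInD_extend hwalk harc hwX⟩
  have hback : ∀ u ∈ T, ReachInD A X u v := by
    intro u hu
    obtain ⟨huX, hreach⟩ := Finset.mem_filter.1 hu
    have hsub : X.filter (fun y => ReachInD A X u y) ⊆ T := by
      intro y hy
      obtain ⟨hyX, hr⟩ := Finset.mem_filter.1 hy
      exact Finset.mem_filter.2 ⟨hyX, reachInD_trans hreach hr⟩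
    have hcard := hmin u huX
    have heq := Finset.eq_of_subset_of_card_le hsub hcard
    have : v ∈ X.filter (fun y => ReachInD A X u y) := heq ▸ hvT
    exact (Finset.mem_filter.1 this).2
  have hpar : ∀ u ∈ T, ∀ m n, WalkInD A X v u m → WalkInD A X v u n →
      Even m → Odd n → False := by
    intro u hu m n hm hn hme hno'
    obtain ⟨p, hp⟩ := hback u hu
    rcases Nat.even_or_odd p with hpe | hpo
    · obtain ⟨f, hf0, hfn, -, harcs⟩ := walkInD_trans hn hp
      exact hodd (n + p) (hno'.add_even hpe) f (hfn.trans hf0.symm) harcs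
    · obtain ⟨f, hf0, hfn, -, harcs⟩ := walkInD_trans hm hp
      exact hodd (m + p) (hme.add_odd hpo) f (hfn.trans hf0.symm) harcs
  set B : Finset V := X.filter (fun u => ∃ m, Even m ∧ WalkInD A X v u m) with hB
  have hBX : B ⊆ X := Finset.filter_subset _ _
  have hvB : v ∈ B := Finset.mem_filter.2 ⟨hv, 0, Even.zero, walkInD_refl hv⟩
  have hBT : B ⊆ T := by
    intro u hu
    obtain ⟨huX, m, -, hw⟩ := Finset.mem_filter.1 hu
    exact Finset.mem_filter.2 ⟨huX, m, hw⟩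
  have hBind : ∀ b1 ∈ B, ∀ b2 ∈ B, ¬ A b1 b2 := by
    intro b1 h1 b2 h2 harc
    obtain ⟨h1X, m1, hm1e, hw1⟩ := Finset.mem_filter.1 h1
    obtain ⟨h2X, m2, hm2e, hw2⟩ := Finset.mem_filter.1 h2
    exact hpar b2 (hBT h2) m2 (m1 + 1) hw2 (walkInD_extend hw1 harc h2X) hm2e
      (Even.add_one hm1e)
  have hTB_out : ∀ u ∈ T, u ∉ B → ∃ b ∈ B, A u b := by
    intro u huT huB
    obtain ⟨p, f, hf0, hfp, hfX, hfA⟩ := hback u huT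
    have hp0 : p ≠ 0 := by
      rintro rfl
      rw [← hf0, hfp] at huB
      exact huB hvB
    obtain ⟨k, hk⟩ := (Finset.mem_filter.1 huT).2
    have hkodd : Odd k := by
      rcases Nat.even_or_odd k with he | ho
      · exact absurd (Finset.mem_filter.2 ⟨(Finset.mem_filter.1 huT).1, k, he, hk⟩) huB
      · exact ho
    have harcu : A u (f 1) := by
      have := hfA 0 (by omega)
      rwa [hf0] at this
    have hf1X : f 1 ∈ X := hfX 1 (by omega)
    refine ⟨f 1, ?_, harcu⟩
    exact Finset.mem_filter.2 ⟨hf1X, k + 1, hkodd.add_one, walkInD_extend hk harcu hf1X⟩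
  set X' : Finset V := X.filter (fun u => u ∉ B ∧ ∀ b ∈ B, ¬ A u b) with hX'def
  have hX' : X' ⊂ X := by
    refine (Finset.ssubset_iff_of_subset (Finset.filter_subset _ _)).2 ⟨v, hv, ?_⟩
    intro hvX'
    exact (Finset.mem_filter.1 hvX').2.1 hvB
  obtain ⟨K', hK'X, hK'ind, hK'abs⟩ := ih X' hX'
  have hX'T : ∀ u ∈ X', u ∉ T := by
    intro u hu huT
    obtain ⟨huX, hunB, hnoarc⟩ := Finset.mem_filter.1 hu
    obtain ⟨b, hb, harc⟩ := hTB_out u huT hunB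
    exact hnoarc b hb harc
  refine ⟨B ∪ K', Finset.union_subset hBX (hK'X.trans (Finset.filter_subset _ _)), ?_, ?_⟩
  · intro u hu w hw harc
    rcases Finset.mem_union.1 hu with huB | huK <;> rcases Finset.mem_union.1 hw with hwB | hwK
    · exact hBind u huB w hwB harc
    · -- u ∈ B, w ∈ K' : then w ∈ T, contradiction
      have hwX' := hK'X hwK
      have hwX : w ∈ X := (Finset.filter_subset _ _) hwX'
      have hwT : w ∈ T := hTclosed u (hBT huB) w harc hwX
      exact hX'T w hwX' hwT
    · exact (Finset.mem_filter.1 (hK'X huK)).2.2 w hwB harc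
    · exact hK'ind u huK w hwK harc
  · intro u huX huK
    by_cases huX' : u ∈ X'
    · have : u ∉ K' := fun h => huK (Finset.mem_union_right _ h)
      obtain ⟨w, hw, harc⟩ := hK'abs u huX' this
      exact ⟨w, Finset.mem_union_right _ hw, harc⟩
    · have : ¬ (u ∉ B ∧ ∀ b ∈ B, ¬ A u b) := by
        intro h
        exact huX' (Finset.mem_filter.2 ⟨huX, h⟩)
      push_neg at this
      rcases Classical.em (u ∈ B) with huB | hunB
      · exact absurd (Finset.mem_union_left _ huB) huK
      · obtain ⟨b, hb, harc⟩ := this hunB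
        exact ⟨b, Finset.mem_union_left _ hb, harc⟩

end Kernel


section OddClosed
variable {V : Type*} {A : V → V → Prop}

lemma no_odd_closed_walk
    (hno : ¬ ∃ (n : ℕ) (c : ZMod n → V), Odd n ∧ Function.Injective c ∧
      ∀ i : ZMod n, A (c i) (c (i + 1))) :
    ∀ n, Odd n → ∀ f : ℕ → V, f n = f 0 → (∀ i, i < n → A (f i) (f (i + 1))) → False := by
  intro n
  induction n using Nat.strong_induction_on with
  | _ n ih =>
  intro hodd f hclosed harc
  have hn1 : 1 ≤ n := hodd.pos
  by_cases hinj : ∀ i j, i < n → j < n → f i = f j → i = j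
  · -- build an injective cycle, contradicting hno
    apply hno
    have hn0 : NeZero n := ⟨by omega⟩
    refine ⟨n, fun i => f i.val, hodd, ?_, ?_⟩
    · intro i j hij
      have := hinj i.val j.val (ZMod.val_lt i) (ZMod.val_lt j) hij
      exact ZMod.val_injective n this
    · intro i
      have hiv : i.val < n := ZMod.val_lt i
      have hval : (i + 1).val = (i.val + 1) % n := by
        rw [ZMod.val_add, ZMod.val_one_eq_one_mod]
        conv_rhs => rw [Nat.add_mod, Nat.mod_eq_of_lt hiv]

      show A (f i.val) (f ((i + 1).val))
      have key : f ((i + 1).val) = f (i.val + 1) := by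
        rw [hval]
        rcases Nat.lt_or_ge (i.val + 1) n with h | h
        · rw [Nat.mod_eq_of_lt h]
        · have : i.val + 1 = n := by omega
          rw [this, Nat.mod_self, ← hclosed]
      rw [key]
      exact harc i.val hiv
  · push_neg at hinj
    obtain ⟨i0, j0, hi0, hj0, hfij, hne0⟩ := hinj
    have key : ∀ i j, i < j → j < n → f i = f j → False := by
      intro i j hij hj hfe
      have ha1 : 1 ≤ j - i := by omega
      have han : j - i < n := by omega
      have hb1 : 1 ≤ n - (j - i) := by omega
      have hbn : n - (j - i) < n := by omega
      rcases Nat.even_or_odd (j - i) with hae | hao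
      · -- the spliced walk of length n - (j-i) is odd
        have hbo : Odd (n - (j - i)) := by
          rw [Nat.odd_iff] at hodd ⊢
          rw [Nat.even_iff] at hae
          omega
        refine ih (n - (j - i)) hbn hbo (fun k => if k ≤ i then f k else f (k + (j - i)))
          ?_ ?_
        · have hbi : ¬ n - (j - i) ≤ i := by omega
          have h0i : (0 : ℕ) ≤ i := Nat.zero_le i
          simp only [hbi, if_false, h0i, if_true]
          have : n - (j - i) + (j - i) = n := by omega
          rw [this, hclosed]
        · intro k hk
          rcases Nat.lt_trichotomy k i with hki | hki | hki
          · have h1 : k ≤ i := le_of_lt hki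
            have h2 : k + 1 ≤ i := hki
            simp only [h1, if_true, h2, if_true]
            exact harc k (by omega)
          · subst hki
            have h2 : ¬ k + 1 ≤ k := by omega
            simp only [le_refl, if_true, h2, if_false]
            have : k + 1 + (j - k) = j + 1 := by omega
            rw [this, hfe]
            exact harc j (by omega)
          · have h1 : ¬ k ≤ i := by omega
            have h2 : ¬ k + 1 ≤ i := by omega
            simp only [h1, if_false, h2, if_false]
            have : k + 1 + (j - i) = (k + (j - i)) + 1 := by omega
            rw [this]
            exact harc (k + (j - i)) (by omega)
      · refine ih (j - i) han hao (fun k => f (i + k)) ?_ ?_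
        · show f (i + (j - i)) = f (i + 0)
          have : i + (j - i) = j := by omega
          rw [this, ← hfe, Nat.add_zero]
        · intro k hk
          show A (f (i + k)) (f (i + (k + 1)))
          have : i + (k + 1) = (i + k) + 1 := by omega
          rw [this]
          exact harc (i + k) (by omega)
    rcases Nat.lt_or_ge i0 j0 with h | h
    · exact key i0 j0 h hj0 hfij
    · exact key j0 i0 (by omega) hi0 hfij.symm

end OddClosed


section Main
variable {V α : Type*} [Fintype V] [DecidableEq α] {A : V → V → Prop} [DecidableRel A]

lemma color_aux
    (hker : ∀ X : Finset V, ∃ K : Finset V, K ⊆ X ∧ (∀ u ∈ K, ∀ w ∈ K, ¬ A u w) ∧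
      ∀ u ∈ X, u ∉ K → ∃ w ∈ K, A u w) :
    ∀ (n : ℕ) (r : V → ℕ) (S : V → Finset α), (∑ v, r v ≤ n) →
      (∀ v, r v + ∑ u ∈ Finset.univ.filter (fun u => A v u), r u ≤ (S v).card) →
      ∃ C : V → Finset α, (∀ v, C v ⊆ S v) ∧ (∀ v, (C v).card = r v) ∧
        ∀ u v, u ≠ v → (A u v ∨ A v u) → Disjoint (C u) (C v) := by
  classical
  intro n
  induction n with
  | zero =>
    intro r S hsum hS
    have hr : ∀ v, r v = 0 := by
      intro v
      have h0 : ∑ v, r v = 0 := Nat.le_zero.1 hsum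
      exact (Finset.sum_eq_zero_iff.1 h0) v (Finset.mem_univ v)
    exact ⟨fun _ => ∅, fun v => Finset.empty_subset _, fun v => by simp [hr v],
      fun u v _ _ => Finset.disjoint_empty_left _⟩
  | succ n ihn =>
    intro r S hsum hS
    by_cases h0 : ∀ v, r v = 0
    · exact ⟨fun _ => ∅, fun v => Finset.empty_subset _, fun v => by simp [h0 v],
        fun u v _ _ => Finset.disjoint_empty_left _⟩
    push_neg at h0
    obtain ⟨v0, hv0⟩ := h0
    have hrv0 : 0 < r v0 := Nat.pos_of_ne_zero hv0
    have hS0 : (S v0).Nonempty := by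
      rw [← Finset.card_pos]
      have := hS v0
      omega
    obtain ⟨c, hc⟩ := hS0
    set X : Finset V := Finset.univ.filter (fun v => 0 < r v ∧ c ∈ S v) with hXdef
    obtain ⟨K, hKX, hKind, hKabs⟩ := hker X
    have hv0X : v0 ∈ X := Finset.mem_filter.2 ⟨Finset.mem_univ _, hrv0, hc⟩
    have hKmem : ∀ v ∈ K, 0 < r v ∧ c ∈ S v := fun v hv => (Finset.mem_filter.1 (hKX hv)).2
    have hKne : K.Nonempty := by
      by_cases hv0K : v0 ∈ K
      · exact ⟨v0, hv0K⟩
      · obtain ⟨w, hw, -⟩ := hKabs v0 hv0X hv0K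
        exact ⟨w, hw⟩
    set r' : V → ℕ := fun v => if v ∈ K then r v - 1 else r v with hr'def
    set S' : V → Finset α := fun v => if v ∈ X then (S v).erase c else S v with hS'def
    have hr'le : ∀ v, r' v ≤ r v := by
      intro v; simp only [hr'def]; split <;> omega
    have hsum' : ∑ v, r' v ≤ n := by
      obtain ⟨k0, hk0⟩ := hKne
      have hlt : ∑ v, r' v < ∑ v, r v := by
        refine Finset.sum_lt_sum (fun v _ => hr'le v) ⟨k0, Finset.mem_univ _, ?_⟩
        have := (hKmem k0 hk0).1
        simp only [hr'def, if_pos hk0]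
        omega
      omega
    have hS'S : ∀ v, S' v ⊆ S v := by
      intro v; simp only [hS'def]; split
      · exact Finset.erase_subset _ _
      · exact Finset.Subset.refl _
    have hS' : ∀ v, r' v + ∑ u ∈ Finset.univ.filter (fun u => A v u), r' u ≤ (S' v).card := by
      intro v
      have hsle : ∑ u ∈ Finset.univ.filter (fun u => A v u), r' u ≤
          ∑ u ∈ Finset.univ.filter (fun u => A v u), r u :=
        Finset.sum_le_sum fun u _ => hr'le u
      by_cases hvX : v ∈ X
      · have hcS : c ∈ S v := (Finset.mem_filter.1 hvX).2.2
        have hcard : (S' v).card = (S v).card - 1 := by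
          simp only [hS'def, if_pos hvX]
          exact Finset.card_erase_of_mem hcS
        have hcpos : 0 < (S v).card := Finset.card_pos.2 ⟨c, hcS⟩
        by_cases hvK : v ∈ K
        · have hrv : r' v = r v - 1 := by simp only [hr'def, if_pos hvK]
          have hrpos := (hKmem v hvK).1
          have := hS v
          rw [hrv, hcard]
          omega
        · obtain ⟨u0, hu0K, hu0arc⟩ := hKabs v hvX hvK
          have hu0mem : u0 ∈ Finset.univ.filter (fun u => A v u) :=
            Finset.mem_filter.2 ⟨Finset.mem_univ _, hu0arc⟩
          have hslt : ∑ u ∈ Finset.univ.filter (fun u => A v u), r' u <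
              ∑ u ∈ Finset.univ.filter (fun u => A v u), r u := by
            refine Finset.sum_lt_sum (fun u _ => hr'le u) ⟨u0, hu0mem, ?_⟩
            have := (hKmem u0 hu0K).1
            simp only [hr'def, if_pos hu0K]
            omega
          have hrv : r' v = r v := by simp only [hr'def, if_neg hvK]
          have := hS v
          rw [hrv, hcard]
          omega
      · have hSv : S' v = S v := by simp only [hS'def, if_neg hvX]
        rw [hSv]
        have hvK : v ∉ K := fun h => hvX (hKX h)
        have hrv : r' v = r v := by simp only [hr'def, if_neg hvK]
        rw [hrv]
        have := hS v
        omega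
    obtain ⟨C', hC'sub, hC'card, hC'dis⟩ := ihn r' S' hsum' hS'
    have hcC' : ∀ v, c ∉ C' v := by
      intro v hcv
      have hmem : c ∈ S' v := hC'sub v hcv
      by_cases hvX : v ∈ X
      · simp only [hS'def, if_pos hvX] at hmem
        exact Finset.notMem_erase c _ hmem
      · have hcS : c ∈ S v := by simpa only [hS'def, if_neg hvX] using hmem
        have hr0 : r v = 0 := by
          by_contra hr0
          exact hvX (Finset.mem_filter.2 ⟨Finset.mem_univ _, Nat.pos_of_ne_zero hr0, hcS⟩)
        have hvK : v ∉ K := fun h => hvX (hKX h)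
        have hcard0 : (C' v).card = 0 := by
          rw [hC'card v]; simp only [hr'def, if_neg hvK, hr0]
        rw [Finset.card_eq_zero] at hcard0
        rw [hcard0] at hcv
        exact absurd hcv (Finset.notMem_empty c)
    refine ⟨fun v => if v ∈ K then insert c (C' v) else C' v, ?_, ?_, ?_⟩
    · intro v
      by_cases hvK : v ∈ K
      · simp only [if_pos hvK]
        exact Finset.insert_subset (hKmem v hvK).2 ((hC'sub v).trans (hS'S v))
      · simp only [if_neg hvK]
        exact (hC'sub v).trans (hS'S v)
    · intro v
      by_cases hvK : v ∈ K
      · simp only [if_pos hvK]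
        rw [Finset.card_insert_of_notMem (hcC' v), hC'card v]
        simp only [hr'def, if_pos hvK]
        have := (hKmem v hvK).1
        omega
      · simp only [if_neg hvK]
        rw [hC'card v]
        simp only [hr'def, if_neg hvK]
    · intro u v hne harc
      by_cases huK : u ∈ K <;> by_cases hvK : v ∈ K
      · exfalso
        rcases harc with h | h
        · exact hKind u huK v hvK h
        · exact hKind v hvK u huK h
      · simp only [if_pos huK, if_neg hvK]
        rw [Finset.disjoint_insert_left]
        exact ⟨hcC' v, hC'dis u v hne harc⟩
      · simp only [if_neg huK, if_pos hvK]
        rw [Finset.disjoint_insert_right]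
        exact ⟨hcC' u, hC'dis u v hne harc⟩
      · simp only [if_neg huK, if_neg hvK]
        exact hC'dis u v hne harc
end Main

/-- Let `D` be a digraph (arc relation `A`) with no directed cycle of odd length, let
`r : V → ℕ`, and for each `v` let `S v` be a finite set with
`|S v| ≥ r v + Σ_{u ∈ N⁺(v)} r u`. Then there are subsets `C v ⊆ S v` with
`|C v| = r v` such that `C u ∩ C v = ∅` whenever `u ≠ v` are joined by an arc. -/
theorem exists_disjoint_subsets_of_no_odd_dicycle {V α : Type*} [Fintype V]
    [DecidableEq α] (A : V → V → Prop) [DecidableRel A]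
    (hno : ¬ ∃ (n : ℕ) (c : ZMod n → V), Odd n ∧ Function.Injective c ∧
      ∀ i : ZMod n, A (c i) (c (i + 1)))
    (r : V → ℕ) (S : V → Finset α)
    (hS : ∀ v, r v + ∑ u ∈ Finset.univ.filter (fun u => A v u), r u ≤ (S v).card) :
    ∃ C : V → Finset α,
      (∀ v, C v ⊆ S v) ∧ (∀ v, (C v).card = r v) ∧
      ∀ u v, u ≠ v → (A u v ∨ A v u) → Disjoint (C u) (C v) := by
  have hodd := no_odd_closed_walk (A := A) hno
  have hker := exists_kernel_of_no_odd_closed hodd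
  exact color_aux hker (∑ v, r v) r S le_rfl hS
end

section
/- Let P = v₁v₂...v_{2k+1} be a path on an odd number 2k+1 ≥ 3 of vertices, let 0 ≤ r₁ ≤ 2 and 0 ≤ r_{2k+1} ≤ 2, and let F : V(P) → 2^{[14]} be a function with |F(v₁)| ≤ 3 + r₁, |F(v_{2k+1})| ≤ 3 + r_{2k+1}, |F(v_i)| = 2 for all 2 ≤ i ≤ 2k, |F(v₁) ∩ F(v₂)| ≤ r₁, and |F(v_{2k}) ∩ F(v_{2k+1})| ≤ r_{2k+1}. Then there is an F-avoiding coloring f of P such that |f(v_j)| = 6 for every 2 ≤ j ≤ 2k, |f(v₁)| = 8 − r₁, and |f(v_{2k+1})| = 8 − r_{2k+1}. -/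
lemma extend14 {A T : Finset (Fin 14)} {n : ℕ} (hTA : Disjoint T A) (hTn : T.card ≤ n)
    (hn : n + A.card ≤ 14) : ∃ s : Finset (Fin 14), T ⊆ s ∧ Disjoint s A ∧ s.card = n := by
  have hsub : T ⊆ Aᶜ := by
    intro x hx
    simp only [Finset.mem_compl]
    exact fun hA => (Finset.disjoint_left.mp hTA hx) hA
  have hcard : n ≤ Aᶜ.card := by
    rw [Finset.card_compl]; simp only [Fintype.card_fin]; omega
  obtain ⟨u, h1, h2, h3⟩ := Finset.exists_subsuperset_card_eq hsub hTn hcard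
  refine ⟨u, h1, ?_, h3⟩
  rw [Finset.disjoint_left]
  intro x hx
  have := h2 hx
  simp only [Finset.mem_compl] at this
  exact this

lemma card_union_le' (A s : Finset (Fin 14)) : (A ∪ s).card = (A \ s).card + s.card :=
  (Finset.card_sdiff_add_card A s).symm

lemma base_case (r₁ r₂ : ℕ) (hr₁ : r₁ ≤ 2) (hr₂ : r₂ ≤ 2)
    (F : ℕ → Finset (Fin 14))
    (hF0 : (F 0).card ≤ 3 + r₁) (hFend : (F 2).card ≤ 3 + r₂)
    (hF1 : (F 1).card = 2)
    (hcap0 : (F 0 ∩ F 1).card ≤ r₁)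
    (hcapend : (F 1 ∩ F 2).card ≤ r₂) :
    ∃ f : ℕ → Finset (Fin 14),
      (∀ i, i ≤ 2 → Disjoint (f i) (F i)) ∧
      (∀ i, i < 2 → Disjoint (f i) (f (i + 1))) ∧
      (f 0).card = 8 - r₁ ∧ (f 2).card = 8 - r₂ ∧
      ∀ i, 0 < i → i < 2 → (f i).card = 6 := by
  -- choose T1 ⊆ F0 \ F1 of card |F0| - r₁
  have h01 : (F 0 ∩ F 1).card + (F 0 \ F 1).card = (F 0).card :=
    Finset.card_inter_add_card_sdiff _ _
  obtain ⟨T1, hT1sub, hT1card⟩ := Finset.exists_subset_card_eq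
    (show (F 0).card - r₁ ≤ (F 0 \ F 1).card by omega)
  have h21 : (F 2 ∩ F 1).card + (F 2 \ F 1).card = (F 2).card :=
    Finset.card_inter_add_card_sdiff _ _
  have h21' : (F 2 ∩ F 1).card ≤ r₂ := by rwa [Finset.inter_comm]
  obtain ⟨T2, hT2sub, hT2card⟩ := Finset.exists_subset_card_eq
    (show (F 2).card - r₂ ≤ (F 2 \ F 1).card by omega)
  -- f1
  have hTdisj : Disjoint (T1 ∪ T2) (F 1) := by
    rw [Finset.disjoint_left]
    intro x hx
    rcases Finset.mem_union.mp hx with h | h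
    · exact (Finset.mem_sdiff.mp (hT1sub h)).2
    · exact (Finset.mem_sdiff.mp (hT2sub h)).2
  have hTcard : (T1 ∪ T2).card ≤ 6 := le_trans (Finset.card_union_le _ _) (by omega)
  obtain ⟨f1, hf1T, hf1disj, hf1card⟩ := extend14 (n := 6) hTdisj hTcard (by omega)
  -- f0
  have hF0f1 : (F 0 ∪ f1).card ≤ 6 + r₁ := by
    rw [card_union_le' (F 0) f1, hf1card]
    have : F 0 \ f1 ⊆ F 0 \ T1 := Finset.sdiff_subset_sdiff (le_refl _) (Finset.union_subset_iff.mp hf1T).1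
    have h2 : (F 0 \ T1).card = (F 0).card - T1.card :=
      Finset.card_sdiff_of_subset (fun x hx => (Finset.mem_sdiff.mp (hT1sub hx)).1)
    have := Finset.card_le_card this
    omega
  obtain ⟨f0, -, hf0disj, hf0card⟩ := extend14 (T := ∅) (A := F 0 ∪ f1) (n := 8 - r₁)
    (Finset.disjoint_empty_left _) (by simp) (by omega)
  -- f2
  have hF2f1 : (F 2 ∪ f1).card ≤ 6 + r₂ := by
    rw [card_union_le' (F 2) f1, hf1card]
    have : F 2 \ f1 ⊆ F 2 \ T2 := Finset.sdiff_subset_sdiff (le_refl _) (Finset.union_subset_iff.mp hf1T).2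
    have h2 : (F 2 \ T2).card = (F 2).card - T2.card :=
      Finset.card_sdiff_of_subset (fun x hx => (Finset.mem_sdiff.mp (hT2sub hx)).1)
    have := Finset.card_le_card this
    omega
  obtain ⟨f2, -, hf2disj, hf2card⟩ := extend14 (T := ∅) (A := F 2 ∪ f1) (n := 8 - r₂)
    (Finset.disjoint_empty_left _) (by simp) (by omega)
  rw [Finset.disjoint_union_right] at hf0disj hf2disj
  refine ⟨fun i => if i = 0 then f0 else if i = 1 then f1 else f2, ?_, ?_, by simp [hf0card], by simp [hf2card], ?_⟩
  · intro i hi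
    interval_cases i <;> simp [hf0disj.1, hf1disj, hf2disj.1]
  · intro i hi
    interval_cases i <;> simp [hf0disj.2, hf2disj.2.symm]
  · intro i h1 h2
    interval_cases i
    simp [hf1card]

lemma odd_path_aux : ∀ k : ℕ, 1 ≤ k →
    ∀ (r₁ r₂ : ℕ), r₁ ≤ 2 → r₂ ≤ 2 →
    ∀ (F : ℕ → Finset (Fin 14)),
    (F 0).card ≤ 3 + r₁ → (F (2 * k)).card ≤ 3 + r₂ →
    (∀ i, 0 < i → i < 2 * k → (F i).card = 2) →
    (F 0 ∩ F 1).card ≤ r₁ →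
    (F (2 * k - 1) ∩ F (2 * k)).card ≤ r₂ →
    ∃ f : ℕ → Finset (Fin 14),
      (∀ i, i ≤ 2 * k → Disjoint (f i) (F i)) ∧
      (∀ i, i < 2 * k → Disjoint (f i) (f (i + 1))) ∧
      (f 0).card = 8 - r₁ ∧ (f (2 * k)).card = 8 - r₂ ∧
      ∀ i, 0 < i → i < 2 * k → (f i).card = 6 := by
  intro k hk
  induction k, hk using Nat.le_induction with
  | base =>
    intro r₁ r₂ hr₁ hr₂ F hF0 hFend hFint hcap0 hcapend
    exact base_case r₁ r₂ hr₁ hr₂ F hF0 hFend (hFint 1 one_pos one_lt_two) hcap0 hcapend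
  | succ k hk ih =>
    intro r₁ r₂ hr₁ hr₂ F hF0 hFend hFint hcap0 hcapend
    have h22 : 2 * (k + 1) = 2 * k + 2 := by ring
    rw [h22] at hFend hFint hcapend ⊢
    have hcapend' : (F (2 * k + 1) ∩ F (2 * k + 2)).card ≤ r₂ := by
      have : 2 * k + 2 - 1 = 2 * k + 1 := by omega
      rwa [this] at hcapend
    -- T ⊆ F(2k+2) \ F(2k+1) with card = |F(2k+2)| - r₂
    have hsd : (F (2 * k + 2) ∩ F (2 * k + 1)).card + (F (2 * k + 2) \ F (2 * k + 1)).card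
        = (F (2 * k + 2)).card := Finset.card_inter_add_card_sdiff _ _
    have hcap'' : (F (2 * k + 2) ∩ F (2 * k + 1)).card ≤ r₂ := by
      rwa [Finset.inter_comm]
    obtain ⟨T, hTsub, hTcard⟩ := Finset.exists_subset_card_eq
      (show (F (2 * k + 2)).card - r₂ ≤ (F (2 * k + 2) \ F (2 * k + 1)).card by omega)
    have hTle3 : T.card ≤ 3 := by omega
    -- modified F'
    set F' : ℕ → Finset (Fin 14) := fun i => if i = 2 * k then F (2 * k) ∪ T else F i with hF'
    have hF'eq : ∀ i, i ≠ 2 * k → F' i = F i := fun i h => if_neg h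
    have hF'2k : F' (2 * k) = F (2 * k) ∪ T := if_pos rfl
    have hF2k : (F (2 * k)).card = 2 := hFint (2 * k) (by omega) (by omega)
    have hF2k1 : (F (2 * k + 1)).card = 2 := hFint (2 * k + 1) (by omega) (by omega)
    have hF2km1 : (F (2 * k - 1)).card = 2 := hFint (2 * k - 1) (by omega) (by omega)
    obtain ⟨f, hd1, hd2, hc0, hcend, hcint⟩ := ih r₁ 2 hr₁ le_rfl F'
      (by rw [hF'eq 0 (by omega)]; exact hF0)
      (by rw [hF'2k]; exact le_trans (Finset.card_union_le _ _) (by omega))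
      (by intro i h1 h2; rw [hF'eq i (by omega)]; exact hFint i h1 (by omega))
      (by rw [hF'eq 0 (by omega), hF'eq 1 (by omega)]; exact hcap0)
      (by rw [hF'eq (2 * k - 1) (by omega)]
          exact le_trans (Finset.card_le_card (Finset.inter_subset_left)) (by omega))
    have hf2kF' : Disjoint (f (2 * k)) (F (2 * k) ∪ T) := by
      have := hd1 (2 * k) le_rfl
      rwa [hF'2k] at this
    rw [Finset.disjoint_union_right] at hf2kF'
    have hc2k : (f (2 * k)).card = 6 := by omega
    -- fA at vertex 2k+1
    have hTdisjA : Disjoint T (F (2 * k + 1) ∪ f (2 * k)) := by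
      rw [Finset.disjoint_union_right]
      constructor
      · rw [Finset.disjoint_left]
        intro x hx
        exact (Finset.mem_sdiff.mp (hTsub hx)).2
      · exact hf2kF'.2.symm
    have hAcard : (F (2 * k + 1) ∪ f (2 * k)).card ≤ 8 :=
      le_trans (Finset.card_union_le _ _) (by omega)
    obtain ⟨fA, hfAT, hfAdisj, hfAcard⟩ := extend14 (n := 6) hTdisjA (by omega) (by omega)
    rw [Finset.disjoint_union_right] at hfAdisj
    -- fB at vertex 2k+2
    have hBcard : (F (2 * k + 2) ∪ fA).card ≤ 6 + r₂ := by
      rw [card_union_le' _ fA, hfAcard]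
      have hsub2 : F (2 * k + 2) \ fA ⊆ F (2 * k + 2) \ T :=
        Finset.sdiff_subset_sdiff (le_refl _) hfAT
      have h2 : (F (2 * k + 2) \ T).card = (F (2 * k + 2)).card - T.card :=
        Finset.card_sdiff_of_subset (fun x hx => (Finset.mem_sdiff.mp (hTsub hx)).1)
      have := Finset.card_le_card hsub2
      omega
    obtain ⟨fB, -, hfBdisj, hfBcard⟩ := extend14 (T := ∅) (A := F (2 * k + 2) ∪ fA)
      (n := 8 - r₂) (Finset.disjoint_empty_left _) (by simp) (by omega)
    rw [Finset.disjoint_union_right] at hfBdisj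
    -- assemble
    set g : ℕ → Finset (Fin 14) :=
      fun i => if i ≤ 2 * k then f i else if i = 2 * k + 1 then fA else fB with hgdef
    have hg1 : ∀ i, i ≤ 2 * k → g i = f i := fun i h => if_pos h
    have hg2 : g (2 * k + 1) = fA := by
      show (if 2 * k + 1 ≤ 2 * k then f (2 * k + 1) else
        if 2 * k + 1 = 2 * k + 1 then fA else fB) = fA
      rw [if_neg (by omega), if_pos rfl]
    have hg3 : g (2 * k + 2) = fB := by
      show (if 2 * k + 2 ≤ 2 * k then f (2 * k + 2) else
        if 2 * k + 2 = 2 * k + 1 then fA else fB) = fB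
      rw [if_neg (by omega), if_neg (by omega)]
    refine ⟨g, ?_, ?_, ?_, ?_, ?_⟩
    · intro i hi
      rcases lt_trichotomy i (2 * k) with h | h | h
      · rw [hg1 i (le_of_lt h)]
        have := hd1 i (le_of_lt h)
        rwa [hF'eq i (by omega)] at this
      · subst h; rw [hg1 _ le_rfl]; exact hf2kF'.1
      · rcases Nat.lt_or_ge i (2 * k + 2) with h' | h'
        · have hi1 : i = 2 * k + 1 := by omega
          subst hi1; rw [hg2]; exact hfAdisj.1
        · have hi2 : i = 2 * k + 2 := by omega
          subst hi2; rw [hg3]; exact hfBdisj.1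
    · intro i hi
      rcases Nat.lt_or_ge i (2 * k) with h | h
      · rw [hg1 i (le_of_lt h), hg1 (i + 1) (by omega)]
        exact hd2 i h
      · rcases Nat.lt_or_ge i (2 * k + 1) with h' | h'
        · have hi1 : i = 2 * k := by omega
          subst hi1
          rw [hg1 _ le_rfl, hg2]
          exact hfAdisj.2.symm
        · have hi2 : i = 2 * k + 1 := by omega
          subst hi2
          rw [hg2, hg3]
          exact hfBdisj.2.symm
    · rw [hg1 0 (by omega)]; exact hc0
    · rw [hg3]; exact hfBcard
    · intro i h1 h2
      rcases Nat.lt_or_ge i (2 * k + 1) with h | h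
      · rw [hg1 i (by omega)]
        rcases Nat.lt_or_ge i (2 * k) with h' | h'
        · exact hcint i h1 h'
        · have hi1 : i = 2 * k := by omega
          subst hi1; exact hc2k
      · have hi1 : i = 2 * k + 1 := by omega
        subst hi1; rw [hg2]; exact hfAcard

/-- Lemma on odd paths. The path `P = v₀v₁...v_{2k}` on `2k+1 ≥ 3` vertices is encoded
by indices `0, 1, ..., 2k`. Given `r₁, r₂ ≤ 2` and `F` with `|F v₀| ≤ 3 + r₁`,
`|F v_{2k}| ≤ 3 + r₂`, `|F v_i| = 2` for internal `i`, `|F v₀ ∩ F v₁| ≤ r₁` and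
`|F v_{2k-1} ∩ F v_{2k}| ≤ r₂`, there is an `F`-avoiding coloring `f` (i.e. `f i` is
disjoint from `F i` and from the colors of the neighbours of `i`) with `|f v_i| = 6`
for internal `i`, `|f v₀| = 8 − r₁`, `|f v_{2k}| = 8 − r₂`. -/
theorem odd_path_avoiding_coloring (k : ℕ) (hk : 1 ≤ k)
    (r₁ r₂ : ℕ) (hr₁ : r₁ ≤ 2) (hr₂ : r₂ ≤ 2)
    (F : ℕ → Finset (Fin 14))
    (hF0 : (F 0).card ≤ 3 + r₁) (hFend : (F (2 * k)).card ≤ 3 + r₂)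
    (hFint : ∀ i, 0 < i → i < 2 * k → (F i).card = 2)
    (hcap0 : (F 0 ∩ F 1).card ≤ r₁)
    (hcapend : (F (2 * k - 1) ∩ F (2 * k)).card ≤ r₂) :
    ∃ f : ℕ → Finset (Fin 14),
      (∀ i, i ≤ 2 * k → Disjoint (f i) (F i)) ∧
      (∀ i, i < 2 * k → Disjoint (f i) (f (i + 1))) ∧
      (f 0).card = 8 - r₁ ∧ (f (2 * k)).card = 8 - r₂ ∧
      ∀ i, 0 < i → i < 2 * k → (f i).card = 6 := by
  exact odd_path_aux k hk r₁ r₂ hr₁ hr₂ F hF0 hFend hFint hcap0 hcapend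
end

section
/- Let P = v₁v₂v₃v₄ be a path on four vertices and let F : V(P) → 2^{[14]} satisfy |F(v₁)| ≤ 4, |F(v₄)| ≤ 4, |F(v₂)| ≤ 2, |F(v₃)| ≤ 2, F(v₁) ∩ F(v₂) = ∅, F(v₃) ∩ F(v₄) = ∅, and |F(v₁) ∩ F(v₄)| ≤ 2. Then there is an F-avoiding coloring f of P with |f(v₁)| = |f(v₄)| = 7 and |f(v₂)| = |f(v₃)| = 6. -/
/-- For the path `v₁v₂v₃v₄` on four vertices: if `|F v₁| ≤ 4`, `|F v₄| ≤ 4`,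
`|F v₂| ≤ 2`, `|F v₃| ≤ 2`, `F v₁ ∩ F v₂ = ∅`, `F v₃ ∩ F v₄ = ∅` and
`|F v₁ ∩ F v₄| ≤ 2`, then there is an `F`-avoiding coloring `f` (each `f vᵢ` disjoint
from `F vᵢ` and from the colors of neighbours of `vᵢ`) with `|f v₁| = |f v₄| = 7` and
`|f v₂| = |f v₃| = 6`. -/
theorem four_path_avoiding_coloring (F₁ F₂ F₃ F₄ : Finset (Fin 14))
    (h₁ : F₁.card ≤ 4) (h₄ : F₄.card ≤ 4) (h₂ : F₂.card ≤ 2) (h₃ : F₃.card ≤ 2)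
    (h12 : Disjoint F₁ F₂) (h34 : Disjoint F₃ F₄) (h14 : (F₁ ∩ F₄).card ≤ 2) :
    ∃ f₁ f₂ f₃ f₄ : Finset (Fin 14),
      f₁.card = 7 ∧ f₂.card = 6 ∧ f₃.card = 6 ∧ f₄.card = 7 ∧
      Disjoint f₁ F₁ ∧ Disjoint f₂ F₂ ∧ Disjoint f₃ F₃ ∧ Disjoint f₄ F₄ ∧
      Disjoint f₁ f₂ ∧ Disjoint f₂ f₃ ∧ Disjoint f₃ f₄ := by
  classical
  have dsc : ∀ {s t : Finset (Fin 14)}, s ⊆ tᶜ → Disjoint s t := by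
    intro s t h
    exact Finset.disjoint_left.2 fun x hx hxt => (Finset.mem_compl.1 (h hx)) hxt
  -- Step 1 : choose f₁ with F₂ ∪ (F₄ \ F₁) ⊆ f₁ ⊆ F₁ᶜ, |f₁| = 7
  have hA₁sub : F₂ ∪ (F₄ \ F₁) ⊆ F₁ᶜ := by
    intro x hx
    rcases Finset.mem_union.1 hx with hx | hx
    · exact Finset.mem_compl.2 fun h => Finset.disjoint_left.1 h12 h hx
    · exact Finset.mem_compl.2 (Finset.mem_sdiff.1 hx).2
  have hF₁c : F₁ᶜ.card = 14 - F₁.card := by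
    simp [Finset.card_compl]
  have hA₁card : (F₂ ∪ (F₄ \ F₁)).card ≤ 7 := by
    have := Finset.card_union_le F₂ (F₄ \ F₁)
    have h' : (F₄ \ F₁).card ≤ F₄.card := Finset.card_le_card Finset.sdiff_subset
    omega
  obtain ⟨f₁, hA₁f₁, hf₁sub, hf₁card⟩ :=
    Finset.exists_subsuperset_card_eq hA₁sub hA₁card (by omega)
  have hF₂f₁ : F₂ ⊆ f₁ := (Finset.subset_union_left).trans hA₁f₁
  have hF₄f₁ : F₄ \ F₁ ⊆ f₁ := (Finset.subset_union_right).trans hA₁f₁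
  -- Step 2 : choose f₄ with F₃ ∪ (F₁ \ F₄) ⊆ f₄ ⊆ F₄ᶜ, |f₄| = 7, |f₁ ∩ f₄| ≤ 2
  have hA₄sub : F₃ ∪ (F₁ \ F₄) ⊆ F₄ᶜ := by
    intro x hx
    rcases Finset.mem_union.1 hx with hx | hx
    · exact Finset.mem_compl.2 fun h => Finset.disjoint_left.1 h34 hx h
    · exact Finset.mem_compl.2 (Finset.mem_sdiff.1 hx).2
  have hF₄c : F₄ᶜ.card = 14 - F₄.card := by
    simp [Finset.card_compl]
  have hA₄card : (F₃ ∪ (F₁ \ F₄)).card ≤ 6 := by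
    have := Finset.card_union_le F₃ (F₁ \ F₄)
    have h' : (F₁ \ F₄).card ≤ F₁.card := Finset.card_le_card Finset.sdiff_subset
    omega
  have key : ∃ f₄ : Finset (Fin 14), f₄.card = 7 ∧ F₃ ⊆ f₄ ∧ f₄ ⊆ F₄ᶜ ∧
      (f₁ ∩ f₄).card ≤ 2 := by
    by_cases hB : 7 ≤ ((F₃ ∪ (F₁ \ F₄)) ∪ (F₄ᶜ \ f₁)).card
    · -- enough room avoiding f₁
      have hBsub : (F₃ ∪ (F₁ \ F₄)) ∪ (F₄ᶜ \ f₁) ⊆ F₄ᶜ := by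
        intro x hx
        rcases Finset.mem_union.1 hx with hx | hx
        · exact hA₄sub hx
        · exact (Finset.mem_sdiff.1 hx).1
      obtain ⟨f₄, hA₄f₄, hf₄B, hf₄card⟩ :=
        Finset.exists_subsuperset_card_eq
          (Finset.subset_union_left : F₃ ∪ (F₁ \ F₄) ⊆ _)
          (by omega) hB
      refine ⟨f₄, hf₄card, (Finset.subset_union_left).trans hA₄f₄,
        hf₄B.trans hBsub, ?_⟩
      have hsub : f₁ ∩ f₄ ⊆ F₃ := by
        intro x hx
        have hx1 := (Finset.mem_inter.1 hx).1
        have hx4 := (Finset.mem_inter.1 hx).2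
        have hxB := hf₄B hx4
        rcases Finset.mem_union.1 hxB with hxA | hxC
        · rcases Finset.mem_union.1 hxA with hx3 | hx14
          · exact hx3
          · exact absurd (Finset.mem_sdiff.1 hx14).1
              (Finset.mem_compl.1 (hf₁sub hx1))
        · exact absurd hx1 (Finset.mem_sdiff.1 hxC).2
      exact le_trans (Finset.card_le_card hsub) h₃
    · -- must take all of F₄ᶜ \ f₁
      push_neg at hB
      have hBsub : (F₃ ∪ (F₁ \ F₄)) ∪ (F₄ᶜ \ f₁) ⊆ F₄ᶜ := by
        intro x hx
        rcases Finset.mem_union.1 hx with hx | hx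
        · exact hA₄sub hx
        · exact (Finset.mem_sdiff.1 hx).1
      obtain ⟨f₄, hBf₄, hf₄sub, hf₄card⟩ :=
        Finset.exists_subsuperset_card_eq (n := 7) hBsub (by omega) (by omega)
      refine ⟨f₄, hf₄card,
        (Finset.subset_union_left.trans Finset.subset_union_left).trans hBf₄,
        hf₄sub, ?_⟩
      -- |F₄ᶜ \ f₁| ≥ 5
      have h5 : 5 ≤ (F₄ᶜ \ f₁).card := by
        have e1 : (f₁ \ F₄).card + (f₁ ∩ F₄).card = f₁.card :=
          Finset.card_sdiff_add_card_inter f₁ F₄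
        have e2 : (F₄ᶜ \ f₁).card + (F₄ᶜ ∩ f₁).card = F₄ᶜ.card :=
          Finset.card_sdiff_add_card_inter F₄ᶜ f₁
        have e3 : F₄ᶜ ∩ f₁ = f₁ \ F₄ := by
          ext x
          simp [Finset.mem_sdiff, Finset.mem_inter, and_comm]
        -- F₄ \ F₁ ⊆ f₁ so |f₁ ∩ F₄| ≥ |F₄ \ F₁| ≥ |F₄| - 2
        have h6 : F₄ \ F₁ ⊆ f₁ ∩ F₄ := fun x hx =>
          Finset.mem_inter.2 ⟨hF₄f₁ hx, (Finset.mem_sdiff.1 hx).1⟩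
        have h7 : (F₄ \ F₁).card ≤ (f₁ ∩ F₄).card := Finset.card_le_card h6
        have h8 : (F₄ \ F₁).card + (F₄ ∩ F₁).card = F₄.card :=
          Finset.card_sdiff_add_card_inter F₄ F₁
        have h9 : (F₄ ∩ F₁).card ≤ 2 := by
          rw [Finset.inter_comm] at h14; exact le_trans (le_of_eq rfl) h14
        rw [e3] at e2
        omega
      have hsubset : F₄ᶜ \ f₁ ⊆ f₄ \ f₁ := by
        intro x hx
        exact Finset.mem_sdiff.2
          ⟨hBf₄ (Finset.mem_union.2 (Or.inr hx)), (Finset.mem_sdiff.1 hx).2⟩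
      have h10 : 5 ≤ (f₄ \ f₁).card := le_trans h5 (Finset.card_le_card hsubset)
      have e4 : (f₄ \ f₁).card + (f₄ ∩ f₁).card = f₄.card :=
        Finset.card_sdiff_add_card_inter f₄ f₁
      rw [Finset.inter_comm]
      omega
  obtain ⟨f₄, hf₄card, hF₃f₄, hf₄sub, hover⟩ := key
  -- Step 3 : choose f₃ ⊆ f₄ᶜ with |f₃| = 6 and |f₃ ∩ f₁ᶜ| ≤ 1
  have hf₄c : f₄ᶜ.card = 7 := by
    simp [Finset.card_compl, hf₄card]
  have hf₁c : f₁ᶜ.card = 7 := by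
    simp [Finset.card_compl, hf₁card]
  have hCsub : f₄ᶜ ∩ f₁ᶜ ⊆ f₄ᶜ := Finset.inter_subset_left
  have hCcard : (f₄ᶜ ∩ f₁ᶜ).card ≤ 2 := by
    have e1 : (f₄ᶜ \ f₁ᶜ).card + (f₄ᶜ ∩ f₁ᶜ).card = f₄ᶜ.card :=
      Finset.card_sdiff_add_card_inter f₄ᶜ f₁ᶜ
    have e2 : f₄ᶜ \ f₁ᶜ = f₁ \ f₄ := by
      ext x; simp [Finset.mem_sdiff, and_comm]
    have e3 : (f₁ \ f₄).card + (f₁ ∩ f₄).card = f₁.card :=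
      Finset.card_sdiff_add_card_inter f₁ f₄
    rw [e2] at e1
    omega
  have hstep3 : ∃ f₃ : Finset (Fin 14), f₃.card = 6 ∧ f₃ ⊆ f₄ᶜ ∧
      (f₃ ∩ f₁ᶜ).card ≤ 1 := by
    by_cases hC1 : (f₄ᶜ ∩ f₁ᶜ).card ≤ 1
    · have hle : 6 ≤ (f₄ᶜ \ (f₄ᶜ ∩ f₁ᶜ)).card := by
        have := Finset.card_sdiff_of_subset hCsub
        omega
      obtain ⟨f₃, hf₃sub, hf₃card⟩ := Finset.exists_subset_card_eq hle
      refine ⟨f₃, hf₃card, hf₃sub.trans (Finset.sdiff_subset), ?_⟩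
      have : f₃ ∩ f₁ᶜ = ∅ := by
        rw [Finset.eq_empty_iff_forall_notMem]
        intro x hx
        have hx3 := (Finset.mem_inter.1 hx).1
        have hx1 := (Finset.mem_inter.1 hx).2
        have hxs := Finset.mem_sdiff.1 (hf₃sub hx3)
        exact hxs.2 (Finset.mem_inter.2 ⟨hxs.1, hx1⟩)
      simp [this]
    · push_neg at hC1
      have hle : (f₄ᶜ \ (f₄ᶜ ∩ f₁ᶜ)).card ≤ 6 := by
        have := Finset.card_sdiff_of_subset hCsub
        omega
      obtain ⟨f₃, hsub₁, hf₃sub, hf₃card⟩ :=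
        Finset.exists_subsuperset_card_eq (Finset.sdiff_subset) hle (by omega)
      refine ⟨f₃, hf₃card, hf₃sub, ?_⟩
      have e1 : (f₃ \ (f₄ᶜ ∩ f₁ᶜ)).card + (f₃ ∩ (f₄ᶜ ∩ f₁ᶜ)).card = f₃.card :=
        Finset.card_sdiff_add_card_inter f₃ (f₄ᶜ ∩ f₁ᶜ)
      have h5' : f₄ᶜ \ (f₄ᶜ ∩ f₁ᶜ) ⊆ f₃ \ (f₄ᶜ ∩ f₁ᶜ) := by
        intro x hx
        exact Finset.mem_sdiff.2 ⟨hsub₁ hx, (Finset.mem_sdiff.1 hx).2⟩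
      have h6' : (f₄ᶜ \ (f₄ᶜ ∩ f₁ᶜ)).card ≤ (f₃ \ (f₄ᶜ ∩ f₁ᶜ)).card :=
        Finset.card_le_card h5'
      have h7' : (f₄ᶜ \ (f₄ᶜ ∩ f₁ᶜ)).card = 7 - (f₄ᶜ ∩ f₁ᶜ).card := by
        rw [Finset.card_sdiff_of_subset hCsub, hf₄c]
      have h8' : f₃ ∩ f₁ᶜ ⊆ f₃ ∩ (f₄ᶜ ∩ f₁ᶜ) := by
        intro x hx
        have hx3 := (Finset.mem_inter.1 hx).1
        exact Finset.mem_inter.2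
          ⟨hx3, Finset.mem_inter.2 ⟨hf₃sub hx3, (Finset.mem_inter.1 hx).2⟩⟩
      have h9' := Finset.card_le_card h8'
      omega
  obtain ⟨f₃, hf₃card, hf₃sub, hf₃small⟩ := hstep3
  -- Step 4 : choose f₂ ⊆ f₁ᶜ \ f₃ with |f₂| = 6
  have hle2 : 6 ≤ (f₁ᶜ \ f₃).card := by
    have e1 : (f₁ᶜ \ f₃).card + (f₁ᶜ ∩ f₃).card = f₁ᶜ.card :=
      Finset.card_sdiff_add_card_inter f₁ᶜ f₃
    have e2 : f₁ᶜ ∩ f₃ = f₃ ∩ f₁ᶜ := Finset.inter_comm _ _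
    rw [e2] at e1
    omega
  obtain ⟨f₂, hf₂sub, hf₂card⟩ := Finset.exists_subset_card_eq hle2
  have hf₂f₁ : f₂ ⊆ f₁ᶜ := hf₂sub.trans Finset.sdiff_subset
  refine ⟨f₁, f₂, f₃, f₄, hf₁card, hf₂card, hf₃card, hf₄card, ?_, ?_, ?_, ?_, ?_, ?_, ?_⟩
  · exact dsc hf₁sub
  · -- Disjoint f₂ F₂ : f₂ ⊆ f₁ᶜ and F₂ ⊆ f₁
    refine Finset.disjoint_left.2 fun x hx hxF => ?_
    exact (Finset.mem_compl.1 (hf₂f₁ hx)) (hF₂f₁ hxF)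
  · -- Disjoint f₃ F₃ : f₃ ⊆ f₄ᶜ and F₃ ⊆ f₄
    refine Finset.disjoint_left.2 fun x hx hxF => ?_
    exact (Finset.mem_compl.1 (hf₃sub hx)) (hF₃f₄ hxF)
  · exact dsc hf₄sub
  · exact (dsc hf₂f₁).symm
  · refine Finset.disjoint_left.2 fun x hx hx3 => ?_
    exact (Finset.mem_sdiff.1 (hf₂sub hx)).2 hx3
  · exact dsc hf₃sub
end

section
/- If G is a good subcubic graph and X ⊆ V(G), then G − X is good. -/
set_option linter.unusedSectionVars false
set_option maxHeartbeats 1000000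

/-- The degree of a vertex (as the cardinality of its neighbor set). -/
noncomputable def gdeg {V : Type*} (G : SimpleGraph V) (v : V) : ℕ :=
  (G.neighborSet v).ncard

/-- A leaf is a vertex of degree one. -/
def IsLeaf {V : Type*} (G : SimpleGraph V) (v : V) : Prop := gdeg G v = 1

/-- A support vertex is a vertex adjacent to a leaf. -/
def IsSupport {V : Type*} (G : SimpleGraph V) (v : V) : Prop :=
  ∃ u, G.Adj v u ∧ IsLeaf G u

/-- A graph is good if it is bipartite, subcubic, and satisfies (G1)-(G4). -/
def IsGood {V : Type*} (G : SimpleGraph V) : Prop :=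
  -- bipartite
  (∃ c : V → Bool, ∀ u v, G.Adj u v → c u ≠ c v) ∧
  -- subcubic
  (∀ v, gdeg G v ≤ 3) ∧
  -- (G1): no vertex of degree three is adjacent to three vertices of degree three
  (∀ v, gdeg G v = 3 → ¬ ∀ u, G.Adj v u → gdeg G u = 3) ∧
  -- (G2)
  (∀ x y, G.Adj x y → gdeg G x = 3 → gdeg G y = 3 →
    ((∃ l, G.Adj x l ∧ IsLeaf G l) ∨ (∃ l, G.Adj y l ∧ IsLeaf G l)) ∨
    ((∃ s, G.Adj x s ∧ gdeg G s = 2 ∧ IsSupport G s) ∧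
     (∃ s, G.Adj y s ∧ gdeg G s = 2 ∧ IsSupport G s))) ∧
  -- (G3)
  (∀ x y z y' y'₁, G.Adj x y → G.Adj y z → x ≠ z →
    gdeg G x = 3 → gdeg G y = 3 → gdeg G z = 3 →
    (∃ l, G.Adj x l ∧ IsLeaf G l) → (∃ l, G.Adj z l ∧ IsLeaf G l) →
    G.Adj y y' → y' ≠ x → y' ≠ z → gdeg G y' = 2 →
    G.Adj y' y'₁ → y'₁ ≠ y → IsLeaf G y'₁) ∧
  -- (G4)
  (∀ x y z z₁ z₂, G.Adj x y → G.Adj y z → x ≠ z →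
    gdeg G x = 3 → gdeg G y = 3 → gdeg G z = 3 →
    G.Adj z z₁ → G.Adj z z₂ → z₁ ≠ y → z₂ ≠ y → z₁ ≠ z₂ →
    2 ≤ gdeg G z₁ → 2 ≤ gdeg G z₂ →
    (gdeg G z₁ = 2 ∧ IsSupport G z₁) ∨ (gdeg G z₂ = 2 ∧ IsSupport G z₂))

section helpers
variable {V : Type*} [Fintype V] {G : SimpleGraph V} {s : Set V}

lemma adj_induce {a b : s} (h : G.Adj a.val b.val) : (G.induce s).Adj a b := h

lemma nbr_image (v : s) :
    Subtype.val '' ((G.induce s).neighborSet v) = G.neighborSet v.val ∩ s := by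
  ext u
  simp only [Set.mem_image, SimpleGraph.mem_neighborSet, Set.mem_inter_iff]
  constructor
  · rintro ⟨⟨u, hu⟩, hadj, rfl⟩
    exact ⟨hadj, hu⟩
  · rintro ⟨hadj, hu⟩
    exact ⟨⟨u, hu⟩, hadj, rfl⟩

lemma gdeg_induce (v : s) :
    gdeg (G.induce s) v = (G.neighborSet v.val ∩ s).ncard := by
  rw [gdeg, ← nbr_image, Set.ncard_image_of_injective _ Subtype.val_injective]

lemma gdeg_induce_le (v : s) : gdeg (G.induce s) v ≤ gdeg G v.val := by
  rw [gdeg_induce]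
  exact Set.ncard_le_ncard Set.inter_subset_left (Set.toFinite _)

lemma nbrs_mem_of_ge (v : s) (h : gdeg G v.val ≤ gdeg (G.induce s) v) :
    ∀ u, G.Adj v.val u → u ∈ s := by
  rw [gdeg_induce] at h
  have heq := Set.eq_of_subset_of_ncard_le Set.inter_subset_left h (Set.toFinite _)
  intro u hu
  have : u ∈ G.neighborSet v.val ∩ s := heq.symm ▸ hu
  exact this.2

lemma deg3_lift (hsub : ∀ v, gdeg G v ≤ 3) {v : s} (h : gdeg (G.induce s) v = 3) :
    gdeg G v.val = 3 ∧ ∀ u, G.Adj v.val u → u ∈ s := by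
  have h1 := gdeg_induce_le (G := G) v
  have h2 : gdeg G v.val = 3 := le_antisymm (hsub _) (h ▸ h1)
  exact ⟨h2, nbrs_mem_of_ge v (by omega)⟩

lemma leaf_nbhd {l a : V} (hl : IsLeaf G l) (ha : G.Adj l a) :
    G.neighborSet l = {a} := by
  obtain ⟨b, hb⟩ := Set.ncard_eq_one.mp hl
  have haN : a ∈ G.neighborSet l := ha
  rw [hb] at haN
  rw [hb, haN]

lemma leaf_persist {l : s} (hl : IsLeaf G l.val) {a : s} (ha : G.Adj a.val l.val) :
    IsLeaf (G.induce s) l := by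
  rw [IsLeaf, gdeg_induce, leaf_nbhd hl ha.symm,
    Set.inter_eq_self_of_subset_left (Set.singleton_subset_iff.mpr a.2)]
  exact Set.ncard_singleton _

lemma two_nbhd {v x l : V} (hd : gdeg G v = 2) (hx : G.Adj v x) (hl : G.Adj v l)
    (hne : x ≠ l) : G.neighborSet v = {x, l} := by
  have hsub : ({x, l} : Set V) ⊆ G.neighborSet v := by
    rintro u (rfl | rfl)
    exacts [hx, hl]
  exact (Set.eq_of_subset_of_ncard_le hsub
    (by rw [Set.ncard_pair hne]; exact le_of_eq hd) (Set.toFinite _)).symm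

lemma three_nbhd {v a b c : V} (hd : gdeg G v = 3) (ha : G.Adj v a) (hb : G.Adj v b)
    (hc : G.Adj v c) (hab : a ≠ b) (hac : a ≠ c) (hbc : b ≠ c) :
    G.neighborSet v = {a, b, c} := by
  have hsub : ({a, b, c} : Set V) ⊆ G.neighborSet v := by
    rintro u (rfl | rfl | rfl)
    exacts [ha, hb, hc]
  have hcard : ({a, b, c} : Set V).ncard = 3 := by
    rw [Set.ncard_insert_of_notMem (by simp [hab, hac]) (Set.toFinite _),
      Set.ncard_pair hbc]
  exact (Set.eq_of_subset_of_ncard_le hsub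
    (by rw [hcard]; exact le_of_eq hd) (Set.toFinite _)).symm

lemma support_dichotomy {x t : s} (hx3 : gdeg G x.val = 3)
    (hadj : G.Adj x.val t.val) (hd : gdeg G t.val = 2) (hsup : IsSupport G t.val) :
    IsLeaf (G.induce s) t ∨
      (gdeg (G.induce s) t = 2 ∧ IsSupport (G.induce s) t) := by
  obtain ⟨l, hl, hleaf⟩ := hsup
  have hlx : x.val ≠ l := by
    rintro rfl
    rw [IsLeaf] at hleaf
    omega
  have hN : G.neighborSet t.val = {x.val, l} := two_nbhd hd hadj.symm hl hlx
  by_cases hls : l ∈ s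
  · right
    constructor
    · rw [gdeg_induce, hN,
        Set.inter_eq_self_of_subset_left (by
          rintro u (rfl | rfl)
          exacts [x.2, hls])]
      exact Set.ncard_pair hlx
    · exact ⟨⟨l, hls⟩, adj_induce hl, leaf_persist (l := ⟨l, hls⟩) hleaf hl⟩
  · left
    rw [IsLeaf, gdeg_induce, hN]
    have heq : ({x.val, l} : Set V) ∩ s = {x.val} := by
      ext u
      constructor
      · rintro ⟨rfl | rfl, hu⟩
        · rfl
        · exact absurd hu hls
      · rintro rfl
        exact ⟨Or.inl rfl, x.2⟩
    rw [heq]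
    exact Set.ncard_singleton _

lemma support2_persist {t : s} (hd : gdeg G t.val = 2) (hsup : IsSupport G t.val)
    (hge : 2 ≤ gdeg (G.induce s) t) :
    gdeg (G.induce s) t = 2 ∧ IsSupport (G.induce s) t := by
  have heq : gdeg (G.induce s) t = 2 := le_antisymm (hd ▸ gdeg_induce_le t) hge
  obtain ⟨l, hl, hleaf⟩ := hsup
  have hls : l ∈ s := nbrs_mem_of_ge t (by omega) l hl
  exact ⟨heq, ⟨⟨l, hls⟩, adj_induce hl, leaf_persist (l := ⟨l, hls⟩) hleaf hl⟩⟩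

end helpers

/-- If `G` is a good subcubic graph and `X ⊆ V(G)`, then `G − X` is good. -/
theorem isGood_delete {V : Type*} [Fintype V] (G : SimpleGraph V)
    (hG : IsGood G) (X : Set V) :
    IsGood (G.induce (Xᶜ : Set V)) := by
  obtain ⟨⟨c, hc⟩, hsub, h1, h2, h3, h4⟩ := hG
  refine ⟨⟨fun v => c v.val, fun u v h => hc _ _ h⟩,
    fun v => le_trans (gdeg_induce_le v) (hsub _), ?_, ?_, ?_, ?_⟩
  · -- (G1)
    intro v hv3 hall
    obtain ⟨hv3G, hvN⟩ := deg3_lift hsub hv3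
    refine h1 v.val hv3G ?_
    intro u hu
    exact (deg3_lift hsub (hall ⟨u, hvN u hu⟩ (adj_induce hu))).1
  · -- (G2)
    intro x y hxy hx3 hy3
    obtain ⟨hx3G, hxN⟩ := deg3_lift hsub hx3
    obtain ⟨hy3G, hyN⟩ := deg3_lift hsub hy3
    have hxyG : G.Adj x.val y.val := hxy
    rcases h2 _ _ hxyG hx3G hy3G with
      (⟨l, hl, hleaf⟩ | ⟨l, hl, hleaf⟩) |
      ⟨⟨sx, hsx, hsx2, hsxs⟩, ⟨sy, hsy, hsy2, hsys⟩⟩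
    · exact Or.inl (Or.inl ⟨⟨l, hxN l hl⟩, adj_induce hl,
        leaf_persist (l := ⟨l, hxN l hl⟩) hleaf hl⟩)
    · exact Or.inl (Or.inr ⟨⟨l, hyN l hl⟩, adj_induce hl,
        leaf_persist (l := ⟨l, hyN l hl⟩) hleaf hl⟩)
    · have hsxm := hxN sx hsx
      have hsym := hyN sy hsy
      rcases support_dichotomy (t := ⟨sx, hsxm⟩) hx3G hsx hsx2 hsxs with hL | hS
      · exact Or.inl (Or.inl ⟨⟨sx, hsxm⟩, adj_induce hsx, hL⟩)
      rcases support_dichotomy (t := ⟨sy, hsym⟩) hy3G hsy hsy2 hsys with hL | hS'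
      · exact Or.inl (Or.inr ⟨⟨sy, hsym⟩, adj_induce hsy, hL⟩)
      · exact Or.inr ⟨⟨⟨sx, hsxm⟩, adj_induce hsx, hS⟩,
          ⟨⟨sy, hsym⟩, adj_induce hsy, hS'⟩⟩
  · -- (G3)
    intro x y z y' y'₁ hxy hyz hxz hx3 hy3 hz3 _ _ hyy' hy'x hy'z hy'2 hy'₁ hne
    obtain ⟨hx3G, hxN⟩ := deg3_lift hsub hx3
    obtain ⟨hy3G, hyN⟩ := deg3_lift hsub hy3
    obtain ⟨hz3G, hzN⟩ := deg3_lift hsub hz3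
    have hxyG : G.Adj x.val y.val := hxy
    have hyzG : G.Adj y.val z.val := hyz
    have hyy'G : G.Adj y.val y'.val := hyy'
    have hy'₁G : G.Adj y'.val y'₁.val := hy'₁
    have hxzv : x.val ≠ z.val := fun h => hxz (Subtype.ext h)
    have hy'xv : y'.val ≠ x.val := fun h => hy'x (Subtype.ext h)
    have hy'zv : y'.val ≠ z.val := fun h => hy'z (Subtype.ext h)
    have hnev : y'₁.val ≠ y.val := fun h => hne (Subtype.ext h)
    have hNy : G.neighborSet y.val = {x.val, z.val, y'.val} :=
      three_nbhd hy3G hxyG.symm hyzG hyy'G hxzv (Ne.symm hy'xv) (Ne.symm hy'zv)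
    have hy'2G : gdeg G y'.val = 2 := by
      have hle := gdeg_induce_le (G := G) y'
      rcases Nat.lt_or_ge (gdeg G y'.val) 3 with h | h
      · omega
      · exfalso
        refine h1 y.val hy3G ?_
        intro u hu
        have hm : u ∈ G.neighborSet y.val := hu
        rw [hNy] at hm
        simp only [Set.mem_insert_iff, Set.mem_singleton_iff] at hm
        rcases hm with rfl | rfl | rfl
        exacts [hx3G, hz3G, le_antisymm (hsub _) h]
    have hNy' : G.neighborSet y'.val = {y.val, y'₁.val} :=
      two_nbhd hy'2G hyy'G.symm hy'₁G (Ne.symm hnev)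
    have leafy : ∀ l, G.Adj y.val l → IsLeaf G l → False := by
      intro l hl hleaf
      have hm : l ∈ G.neighborSet y.val := hl
      rw [hNy] at hm
      simp only [Set.mem_insert_iff, Set.mem_singleton_iff] at hm
      rw [IsLeaf] at hleaf
      rcases hm with rfl | rfl | rfl <;> omega
    have suppy : (∃ s', G.Adj y.val s' ∧ gdeg G s' = 2 ∧ IsSupport G s') →
        IsLeaf (G.induce (Xᶜ : Set V)) y'₁ := by
      rintro ⟨t, ht, ht2, hts⟩
      obtain ⟨u, hu, huleaf⟩ := hts
      have hm : t ∈ G.neighborSet y.val := ht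
      rw [hNy] at hm
      simp only [Set.mem_insert_iff, Set.mem_singleton_iff] at hm
      have hty' : t = y'.val := by
        rcases hm with rfl | rfl | rfl
        · omega
        · omega
        · rfl
      subst hty'
      have hmu : u ∈ G.neighborSet y'.val := hu
      rw [hNy'] at hmu
      simp only [Set.mem_insert_iff, Set.mem_singleton_iff] at hmu
      have huy : u = y'₁.val := by
        rcases hmu with rfl | rfl
        · rw [IsLeaf] at huleaf; omega
        · rfl
      subst huy
      exact leaf_persist huleaf hy'₁G
    have Hx : (∃ l, G.Adj x.val l ∧ IsLeaf G l) ∨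
        IsLeaf (G.induce (Xᶜ : Set V)) y'₁ := by
      rcases h2 _ _ hxyG hx3G hy3G with (h | ⟨l, hl, hleaf⟩) | ⟨_, hs⟩
      · exact Or.inl h
      · exact (leafy l hl hleaf).elim
      · exact Or.inr (suppy hs)
    have Hz : (∃ l, G.Adj z.val l ∧ IsLeaf G l) ∨
        IsLeaf (G.induce (Xᶜ : Set V)) y'₁ := by
      rcases h2 _ _ hyzG hy3G hz3G with (⟨l, hl, hleaf⟩ | h) | ⟨hs, _⟩
      · exact (leafy l hl hleaf).elim
      · exact Or.inl h
      · exact Or.inr (suppy hs)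
    rcases Hx with hlx | hdone
    · rcases Hz with hlz | hdone
      · have hres := h3 x.val y.val z.val y'.val y'₁.val hxyG hyzG hxzv hx3G hy3G
          hz3G hlx hlz hyy'G hy'xv hy'zv hy'2G hy'₁G hnev
        exact leaf_persist hres hy'₁G
      · exact hdone
    · exact hdone
  · -- (G4)
    intro x y z z₁ z₂ hxy hyz hxz hx3 hy3 hz3 hz₁ hz₂ hz₁y hz₂y hz₁₂ hd₁ hd₂
    obtain ⟨hx3G, _⟩ := deg3_lift hsub hx3
    obtain ⟨hy3G, _⟩ := deg3_lift hsub hy3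
    obtain ⟨hz3G, _⟩ := deg3_lift hsub hz3
    have hxyG : G.Adj x.val y.val := hxy
    have hyzG : G.Adj y.val z.val := hyz
    have hz₁G : G.Adj z.val z₁.val := hz₁
    have hz₂G : G.Adj z.val z₂.val := hz₂
    have h₁ := le_trans hd₁ (gdeg_induce_le (G := G) z₁)
    have h₂ := le_trans hd₂ (gdeg_induce_le (G := G) z₂)
    rcases h4 x.val y.val z.val z₁.val z₂.val hxyG hyzG
      (fun h => hxz (Subtype.ext h)) hx3G hy3G hz3G hz₁G hz₂G
      (fun h => hz₁y (Subtype.ext h)) (fun h => hz₂y (Subtype.ext h))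
      (fun h => hz₁₂ (Subtype.ext h)) h₁ h₂ with ⟨hd, hs⟩ | ⟨hd, hs⟩
    · exact Or.inl (support2_persist hd hs hd₁)
    · exact Or.inr (support2_persist hd hs hd₂)
end

section
/- Let G be a graph and let G₀, G₁, ..., G_k be induced subgraphs of G such that G = G₀ ∪ G₁ ∪ ... ∪ G_k, |V(G₀) ∩ V(G_i)| = 2 for each 1 ≤ i ≤ k, and V(G_i) ∩ V(G_j) ⊆ V(G₀) for distinct i, j ∈ {1,...,k}. For each i, write V(G₀) ∩ V(G_i) = {u_i, v_i}, and assume u_iv_i is not an edge of G_i. Let a, b, c, d be positive integers with a/b ≥ c/d. If G₀ has an (a:b)-coloring, and both G_i + u_iv_i and G_i / u_iv_i have (c:d)-colorings for every 1 ≤ i ≤ k, then G has an (ad:bd)-coloring. -/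
open Finset


lemma exists_inj_three {α β : Type*} [Fintype α] [Fintype β] [DecidableEq α] [DecidableEq β]
    (R₀ R₁ R₂ : Finset α) (T₀ T₁ T₂ : Finset β)
    (hR01 : Disjoint R₀ R₁) (hR02 : Disjoint R₀ R₂) (hR12 : Disjoint R₁ R₂)
    (hT01 : Disjoint T₀ T₁) (hT02 : Disjoint T₀ T₂) (hT12 : Disjoint T₁ T₂)
    (h0 : R₀.card = T₀.card) (h1 : R₁.card = T₁.card) (h2 : R₂.card = T₂.card)
    (hcard : Fintype.card α ≤ Fintype.card β) :
    ∃ Φ : α → β, Function.Injective Φ ∧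
      R₀.image Φ = T₀ ∧ R₁.image Φ = T₁ ∧ R₂.image Φ = T₂ := by
  classical
  set R₃ : Finset α := (R₀ ∪ R₁ ∪ R₂)ᶜ with hR₃
  set T₃ : Finset β := (T₀ ∪ T₁ ∪ T₂)ᶜ with hT₃
  have hcard3 : R₃.card ≤ T₃.card := by
    have hcu : (R₀ ∪ R₁ ∪ R₂).card = R₀.card + R₁.card + R₂.card := by
      rw [card_union_of_disjoint, card_union_of_disjoint hR01]
      · rw [disjoint_union_left]; exact ⟨hR02, hR12⟩
    have htu : (T₀ ∪ T₁ ∪ T₂).card = T₀.card + T₁.card + T₂.card := by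
      rw [card_union_of_disjoint, card_union_of_disjoint hT01]
      · rw [disjoint_union_left]; exact ⟨hT02, hT12⟩
    have h1' : (T₀ ∪ T₁ ∪ T₂).card ≤ Fintype.card β := card_le_univ _
    rw [hR₃, hT₃, card_compl, card_compl, hcu, htu, h0, h1, h2]
    omega
  obtain ⟨e₃⟩ : Nonempty (↥R₃ ↪ ↥T₃) := by
    apply Function.Embedding.nonempty_of_card_le
    simpa [Fintype.card_coe] using hcard3
  let e₀ := Finset.equivOfCardEq h0
  let e₁ := Finset.equivOfCardEq h1
  let e₂ := Finset.equivOfCardEq h2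
  have hmem3 : ∀ x, x ∉ R₀ → x ∉ R₁ → x ∉ R₂ → x ∈ R₃ := by
    intro x hx0 hx1 hx2; simp [hR₃, hx0, hx1, hx2]
  let Φ : α → β := fun x =>
    if hx0 : x ∈ R₀ then (e₀ ⟨x, hx0⟩ : β)
    else if hx1 : x ∈ R₁ then (e₁ ⟨x, hx1⟩ : β)
    else if hx2 : x ∈ R₂ then (e₂ ⟨x, hx2⟩ : β)
    else (e₃ ⟨x, hmem3 x hx0 hx1 hx2⟩ : β)
  -- membership facts
  have hΦ0 : ∀ x (hx : x ∈ R₀), Φ x = (e₀ ⟨x, hx⟩ : β) := fun x hx => by simp [Φ, dif_pos hx]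
  have hΦ1 : ∀ x (hx : x ∈ R₁), Φ x = (e₁ ⟨x, hx⟩ : β) := fun x hx => by
    have h0' : x ∉ R₀ := disjoint_right.1 hR01 hx
    simp [Φ, dif_neg h0', dif_pos hx]
  have hΦ2 : ∀ x (hx : x ∈ R₂), Φ x = (e₂ ⟨x, hx⟩ : β) := fun x hx => by
    have h0' : x ∉ R₀ := disjoint_right.1 hR02 hx
    have h1' : x ∉ R₁ := disjoint_right.1 hR12 hx
    simp [Φ, dif_neg h0', dif_neg h1', dif_pos hx]
  have hΦ3 : ∀ x (h0' : x ∉ R₀) (h1' : x ∉ R₁) (h2' : x ∉ R₂),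
      Φ x = (e₃ ⟨x, hmem3 x h0' h1' h2'⟩ : β) := fun x h0' h1' h2' => by
    simp [Φ, dif_neg h0', dif_neg h1', dif_neg h2']
  have ht0 : ∀ x (hx : x ∈ R₀), Φ x ∈ T₀ := fun x hx => by rw [hΦ0 x hx]; exact (e₀ ⟨x, hx⟩).2
  have ht1 : ∀ x (hx : x ∈ R₁), Φ x ∈ T₁ := fun x hx => by rw [hΦ1 x hx]; exact (e₁ ⟨x, hx⟩).2
  have ht2 : ∀ x (hx : x ∈ R₂), Φ x ∈ T₂ := fun x hx => by rw [hΦ2 x hx]; exact (e₂ ⟨x, hx⟩).2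
  have ht3 : ∀ x (h0' : x ∉ R₀) (h1' : x ∉ R₁) (h2' : x ∉ R₂), Φ x ∈ T₃ := by
    intro x h0' h1' h2'; rw [hΦ3 x h0' h1' h2']; exact (e₃ ⟨x, _⟩).2
  have hnot3 : ∀ z, z ∈ T₃ → z ∉ T₀ ∧ z ∉ T₁ ∧ z ∉ T₂ := by
    intro z hz
    simp only [hT₃, mem_compl, mem_union] at hz
    tauto
  have hinj : Function.Injective Φ := by
    have hclass : ∀ x : α, (x ∈ R₀) ∨ (x ∉ R₀ ∧ x ∈ R₁) ∨ (x ∉ R₀ ∧ x ∉ R₁ ∧ x ∈ R₂) ∨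
        (x ∉ R₀ ∧ x ∉ R₁ ∧ x ∉ R₂) := by intro x; tauto
    intro x y hxy
    rcases hclass x with hx0 | ⟨hx0, hx1⟩ | ⟨hx0, hx1, hx2⟩ | ⟨hx0, hx1, hx2⟩ <;>
      rcases hclass y with hy0 | ⟨hy0, hy1⟩ | ⟨hy0, hy1, hy2⟩ | ⟨hy0, hy1, hy2⟩
    · rw [hΦ0 x hx0, hΦ0 y hy0] at hxy
      exact congrArg Subtype.val (e₀.injective (Subtype.ext hxy))
    · exact absurd (hxy ▸ ht0 x hx0) fun h => Finset.disjoint_left.1 hT01 h (ht1 y hy1)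
    · exact absurd (hxy ▸ ht0 x hx0) fun h => Finset.disjoint_left.1 hT02 h (ht2 y hy2)
    · exact absurd (hxy ▸ ht0 x hx0) fun h => (hnot3 _ (ht3 y hy0 hy1 hy2)).1 h
    · exact absurd (hxy ▸ ht1 x hx1) fun h => Finset.disjoint_right.1 hT01 h (ht0 y hy0)
    · rw [hΦ1 x hx1, hΦ1 y hy1] at hxy
      exact congrArg Subtype.val (e₁.injective (Subtype.ext hxy))
    · exact absurd (hxy ▸ ht1 x hx1) fun h => Finset.disjoint_left.1 hT12 h (ht2 y hy2)
    · exact absurd (hxy ▸ ht1 x hx1) fun h => (hnot3 _ (ht3 y hy0 hy1 hy2)).2.1 h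
    · exact absurd (hxy ▸ ht2 x hx2) fun h => Finset.disjoint_right.1 hT02 h (ht0 y hy0)
    · exact absurd (hxy ▸ ht2 x hx2) fun h => Finset.disjoint_right.1 hT12 h (ht1 y hy1)
    · rw [hΦ2 x hx2, hΦ2 y hy2] at hxy
      exact congrArg Subtype.val (e₂.injective (Subtype.ext hxy))
    · exact absurd (hxy ▸ ht2 x hx2) fun h => (hnot3 _ (ht3 y hy0 hy1 hy2)).2.2 h
    · exact absurd (hxy ▸ ht3 x hx0 hx1 hx2) fun h => (hnot3 _ h).1 (ht0 y hy0)
    · exact absurd (hxy ▸ ht3 x hx0 hx1 hx2) fun h => (hnot3 _ h).2.1 (ht1 y hy1)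
    · exact absurd (hxy ▸ ht3 x hx0 hx1 hx2) fun h => (hnot3 _ h).2.2 (ht2 y hy2)
    · rw [hΦ3 x hx0 hx1 hx2, hΦ3 y hy0 hy1 hy2] at hxy
      exact congrArg Subtype.val (e₃.injective (Subtype.ext hxy))
  have himg : ∀ (R : Finset α) (T : Finset β), R.card = T.card →
      (∀ x ∈ R, Φ x ∈ T) → R.image Φ = T := by
    intro R T hcard' hmem
    apply Finset.eq_of_subset_of_card_le
    · intro z hz; obtain ⟨x, hx, rfl⟩ := Finset.mem_image.1 hz; exact hmem x hx
    · rw [Finset.card_image_of_injective _ hinj, hcard']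
  exact ⟨Φ, hinj, himg R₀ T₀ h0 ht0, himg R₁ T₁ h1 ht1, himg R₂ T₂ h2 ht2⟩


lemma card_filter_val_lt (b m : ℕ) (hm : m ≤ b) :
    ((Finset.univ : Finset (Fin b)).filter fun r : Fin b => (r : ℕ) < m).card = m := by
  have : ((Finset.univ : Finset (Fin b)).filter fun r : Fin b => (r : ℕ) < m)
      = (Finset.range m).attachFin (fun j hj => lt_of_lt_of_le (Finset.mem_range.1 hj) hm) := by
    ext r; simp [Finset.mem_attachFin]
  rw [this, Finset.card_attachFin, Finset.card_range]

lemma branch_coloring {V : Type*} (G : SimpleGraph V) (si : Set V) (ui vi : V)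
    (a b c d m : ℕ) (hm : m ≤ b) (hcb : c * b ≤ a * d)
    (A' B' : Finset (Fin a)) (hA : A'.card = b) (hB : B'.card = b) (hM : (A' ∩ B').card = m)
    (g₀ g₁ : V → Finset (Fin c))
    (hg0card : ∀ x ∈ si, (g₀ x).card = d)
    (hg0adj : ∀ x y, x ∈ si → y ∈ si → G.Adj x y → Disjoint (g₀ x) (g₀ y))
    (hg0eq : g₀ ui = g₀ vi)
    (hg1card : ∀ x ∈ si, (g₁ x).card = d)
    (hg1adj : ∀ x y, x ∈ si → y ∈ si → G.Adj x y → Disjoint (g₁ x) (g₁ y))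
    (hg1disj : Disjoint (g₁ ui) (g₁ vi))
    (hui : ui ∈ si) (hvi : vi ∈ si) :
    ∃ h : V → Finset (Fin a × Fin d),
      (∀ x ∈ si, (h x).card = b * d) ∧
      (∀ x y, x ∈ si → y ∈ si → G.Adj x y → Disjoint (h x) (h y)) ∧
      h ui = A' ×ˢ Finset.univ ∧ h vi = B' ×ˢ Finset.univ := by
  classical
  set Lo : Finset (Fin b) := Finset.univ.filter fun r : Fin b => (r : ℕ) < m with hLo
  set Hi : Finset (Fin b) := Loᶜ with hHi
  have hLoHi : Disjoint Lo Hi := disjoint_compl_right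
  have hLocard : Lo.card = m := card_filter_val_lt b m hm
  have hHicard : Hi.card = b - m := by
    rw [hHi, card_compl, hLocard, Fintype.card_fin]
  have hABcard : (A' \ B').card = b - m := by
    rw [← Finset.sdiff_inter_self_left A' B', Finset.card_sdiff_of_subset Finset.inter_subset_left, hA, hM]
  have hBAcard : (B' \ A').card = b - m := by
    rw [← Finset.sdiff_inter_self_left B' A', Finset.card_sdiff_of_subset Finset.inter_subset_left, hB,
      Finset.inter_comm, hM]
  obtain ⟨Φ, hΦinj, himg0, himg1, himg2⟩ :=
    exists_inj_three ((g₀ ui) ×ˢ Lo) ((g₁ ui) ×ˢ Hi) ((g₁ vi) ×ˢ Hi)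
      ((A' ∩ B') ×ˢ (Finset.univ : Finset (Fin d))) ((A' \ B') ×ˢ (Finset.univ : Finset (Fin d))) ((B' \ A') ×ˢ (Finset.univ : Finset (Fin d)))
      (Finset.disjoint_product.2 (Or.inr hLoHi))
      (Finset.disjoint_product.2 (Or.inr hLoHi))
      (Finset.disjoint_product.2 (Or.inl hg1disj))
      (Finset.disjoint_product.2 (Or.inl (by
        rw [Finset.disjoint_left]; intro z hz hz'
        exact (Finset.mem_sdiff.1 hz').2 (Finset.mem_inter.1 hz).2)))
      (Finset.disjoint_product.2 (Or.inl (by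
        rw [Finset.disjoint_left]; intro z hz hz'
        exact (Finset.mem_sdiff.1 hz').2 (Finset.mem_inter.1 hz).1)))
      (Finset.disjoint_product.2 (Or.inl (by
        rw [Finset.disjoint_left]; intro z hz hz'
        exact (Finset.mem_sdiff.1 hz').2 (Finset.mem_sdiff.1 hz).1)))
      (by rw [Finset.card_product, Finset.card_product, hg0card ui hui, hLocard, hM,
            Finset.card_univ, Fintype.card_fin, Nat.mul_comm])
      (by rw [Finset.card_product, Finset.card_product, hg1card ui hui, hHicard, hABcard,
            Finset.card_univ, Fintype.card_fin, Nat.mul_comm])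
      (by rw [Finset.card_product, Finset.card_product, hg1card vi hvi, hHicard, hBAcard,
            Finset.card_univ, Fintype.card_fin, Nat.mul_comm])
      (by simpa [Fintype.card_prod, Fintype.card_fin] using hcb)
  refine ⟨fun x => ((g₀ x ×ˢ Lo) ∪ (g₁ x ×ˢ Hi)).image Φ, ?_, ?_, ?_, ?_⟩
  · intro x hx
    dsimp only
    rw [Finset.card_image_of_injective _ hΦinj,
      Finset.card_union_of_disjoint (Finset.disjoint_product.2 (Or.inr hLoHi)),
      Finset.card_product, Finset.card_product, hg0card x hx, hg1card x hx, hLocard, hHicard,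
      ← Nat.mul_add]
    have h' : m + (b - m) = b := by omega
    rw [h', Nat.mul_comm]
  · intro x y hx hy hxy
    dsimp only
    rw [Finset.disjoint_image hΦinj]
    have d0 := hg0adj x y hx hy hxy
    have d1 := hg1adj x y hx hy hxy
    rw [Finset.disjoint_union_left]
    constructor
    · rw [Finset.disjoint_union_right]
      exact ⟨Finset.disjoint_product.2 (Or.inl d0), Finset.disjoint_product.2 (Or.inr hLoHi)⟩
    · rw [Finset.disjoint_union_right]
      exact ⟨Finset.disjoint_product.2 (Or.inr hLoHi.symm), Finset.disjoint_product.2 (Or.inl d1)⟩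
  · show ((g₀ ui ×ˢ Lo) ∪ (g₁ ui ×ˢ Hi)).image Φ = A' ×ˢ Finset.univ
    rw [Finset.image_union, himg0, himg1, ← Finset.union_product]
    congr 1
    ext z; simp only [Finset.mem_union, Finset.mem_inter, Finset.mem_sdiff]; tauto
  · show ((g₀ vi ×ˢ Lo) ∪ (g₁ vi ×ˢ Hi)).image Φ = B' ×ˢ Finset.univ
    rw [← hg0eq, Finset.image_union, himg0, himg2, ← Finset.union_product]
    congr 1
    ext z; simp only [Finset.mem_union, Finset.mem_inter, Finset.mem_sdiff]; tauto


/-- Let `G₀, G₁, ..., G_k` be induced subgraphs (on vertex sets `s₀` and `s i`) with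
`G = G₀ ∪ G₁ ∪ ... ∪ G_k`, `s₀ ∩ s i = {u i, v i}` (two distinct nonadjacent vertices),
and `s i ∩ s j ⊆ s₀` for `i ≠ j`. If `a/b ≥ c/d`, `G₀` has an `(a:b)`-coloring, and for
each `i` both `G_i + u_iv_i` and `G_i / u_iv_i` have `(c:d)`-colorings (encoded as
`(c:d)`-colorings of `G_i` with `f(u_i) ∩ f(v_i) = ∅`, resp. `f(u_i) = f(v_i)`),
then `G` has an `(ad:bd)`-coloring. -/
theorem hasFracColoring_of_many_two_cuts {V : Type*} (G : SimpleGraph V) (k : ℕ)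
    (s₀ : Set V) (s : Fin k → Set V) (u v : Fin k → V)
    (hcover : s₀ ∪ ⋃ i, s i = Set.univ)
    (hedges : ∀ x y, G.Adj x y → (x ∈ s₀ ∧ y ∈ s₀) ∨ ∃ i, x ∈ s i ∧ y ∈ s i)
    (hpair : ∀ i, s₀ ∩ s i = {u i, v i})
    (huv : ∀ i, u i ≠ v i)
    (hdisjt : ∀ i j, i ≠ j → s i ∩ s j ⊆ s₀)
    (hnadj : ∀ i, ¬ G.Adj (u i) (v i))
    (a b c d : ℕ) (ha : 0 < a) (hb : 0 < b) (hc : 0 < c) (hd : 0 < d)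
    (hratio : (c : ℚ) / d ≤ (a : ℚ) / b)
    (h0 : HasFracColoring (G.induce s₀) a b)
    (hplus : ∀ i, ∃ f : V → Finset (Fin c),
      (∀ x ∈ s i, (f x).card = d) ∧
      (∀ x y, x ∈ s i → y ∈ s i → G.Adj x y → Disjoint (f x) (f y)) ∧
      Disjoint (f (u i)) (f (v i)))
    (hcontr : ∀ i, ∃ f : V → Finset (Fin c),
      (∀ x ∈ s i, (f x).card = d) ∧
      (∀ x y, x ∈ s i → y ∈ s i → G.Adj x y → Disjoint (f x) (f y)) ∧
      f (u i) = f (v i)) :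
    HasFracColoring G (a * d) (b * d) := by
  classical
  obtain ⟨f₀, hf₀card, hf₀adj⟩ := h0
  have hcb : c * b ≤ a * d := by
    have hb' : (0:ℚ) < (b:ℚ) := by exact_mod_cast hb
    have hd' : (0:ℚ) < (d:ℚ) := by exact_mod_cast hd
    have := (div_le_div_iff₀ hd' hb').1 hratio
    exact_mod_cast this
  have hus : ∀ i, u i ∈ s₀ ∧ u i ∈ s i := by
    intro i
    have : u i ∈ s₀ ∩ s i := by rw [hpair i]; exact Set.mem_insert _ _
    exact this
  have hvs : ∀ i, v i ∈ s₀ ∧ v i ∈ s i := by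
    intro i
    have : v i ∈ s₀ ∩ s i := by
      rw [hpair i]; exact Set.mem_insert_iff.2 (Or.inr rfl)
    exact this
  choose g₀ hg₀card hg₀adj hg₀eq using hcontr
  choose g₁ hg₁card hg₁adj hg₁disj using hplus
  have hbranch : ∀ i, ∃ h : V → Finset (Fin a × Fin d),
      (∀ x ∈ s i, (h x).card = b * d) ∧
      (∀ x y, x ∈ s i → y ∈ s i → G.Adj x y → Disjoint (h x) (h y)) ∧
      h (u i) = f₀ ⟨u i, (hus i).1⟩ ×ˢ Finset.univ ∧
      h (v i) = f₀ ⟨v i, (hvs i).1⟩ ×ˢ Finset.univ := by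
    intro i
    exact branch_coloring G (s i) (u i) (v i) a b c d
      ((f₀ ⟨u i, (hus i).1⟩ ∩ f₀ ⟨v i, (hvs i).1⟩).card)
      (by rw [← hf₀card ⟨u i, (hus i).1⟩]
          exact Finset.card_le_card Finset.inter_subset_left)
      hcb _ _ (hf₀card _) (hf₀card _) rfl (g₀ i) (g₁ i)
      (hg₀card i) (hg₀adj i) (hg₀eq i) (hg₁card i) (hg₁adj i) (hg₁disj i)
      (hus i).2 (hvs i).2
  choose h hhcard hhadj hhu hhv using hbranch
  have hex : ∀ x : V, x ∉ s₀ → ∃ i, x ∈ s i := by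
    intro x hx
    have hx' : x ∈ s₀ ∪ ⋃ i, s i := hcover ▸ Set.mem_univ x
    rcases hx' with hx' | hx'
    · exact absurd hx' hx
    · exact Set.mem_iUnion.1 hx'
  let Fr : V → Finset (Fin a × Fin d) := fun x =>
    if hx : x ∈ s₀ then f₀ ⟨x, hx⟩ ×ˢ Finset.univ else h (hex x hx).choose x
  have hkey : ∀ i x, x ∈ s i → Fr x = h i x := by
    intro i x hx
    by_cases hx0 : x ∈ s₀
    · have hmem : x ∈ s₀ ∩ s i := ⟨hx0, hx⟩
      rw [hpair i] at hmem
      have hFr : Fr x = f₀ ⟨x, hx0⟩ ×ˢ Finset.univ := dif_pos hx0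
      rcases hmem with rfl | rfl
      · rw [hFr, hhu i]
      · rw [hFr, hhv i]
    · have hFr : Fr x = h (hex x hx0).choose x := dif_neg hx0
      have hx' : x ∈ s (hex x hx0).choose := (hex x hx0).choose_spec
      by_cases hi : (hex x hx0).choose = i
      · rw [hFr, hi]
      · exact absurd (hdisjt i _ (Ne.symm hi) ⟨hx, hx'⟩) hx0
  refine ⟨fun x => (Fr x).map (finProdFinEquiv.toEmbedding), ?_, ?_⟩
  · intro x
    rw [Finset.card_map]
    by_cases hx : x ∈ s₀
    · have hFr : Fr x = f₀ ⟨x, hx⟩ ×ˢ Finset.univ := dif_pos hx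
      rw [hFr, Finset.card_product, hf₀card, Finset.card_univ, Fintype.card_fin]
    · have hFr : Fr x = h (hex x hx).choose x := dif_neg hx
      rw [hFr]
      exact hhcard _ _ (hex x hx).choose_spec
  · intro x y hxy
    rw [Finset.disjoint_map]
    rcases hedges x y hxy with ⟨hx, hy⟩ | ⟨i, hx, hy⟩
    · have hFx : Fr x = f₀ ⟨x, hx⟩ ×ˢ Finset.univ := dif_pos hx
      have hFy : Fr y = f₀ ⟨y, hy⟩ ×ˢ Finset.univ := dif_pos hy
      rw [hFx, hFy]
      exact Finset.disjoint_product.2 (Or.inl (hf₀adj ⟨x, hx⟩ ⟨y, hy⟩ hxy))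
    · rw [hkey i x hx, hkey i y hy]
      exact hhadj i x y hx hy hxy
end

section
/- Let G be the graph obtained from an even cycle v₀v₁...v_{2k−1}v₀ (k ≥ 2) by attaching one pendant leaf u_i to each cycle vertex v_i. Let F : V(G) → 2^{[14]} satisfy |F(v)| ≤ 6 − 2deg(v) for every vertex v, and F(u_i) ∩ F(v_i) = ∅ for every leaf u_i. Then there is an F-avoiding coloring f of G with |f(v)| = 8 − deg(v) for every vertex v (that is, |f(v_i)| = 5 and |f(u_i)| = 7 for all i). -/
/-!
Padding each `Fu i` to a `4`-set `U i`, the leaf `u_i` can receive `7` colours as soon as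
`f(v_i)` contains two colours of `U i`. So it suffices to choose disjoint consecutive
`2`-sets `A i ⊆ U i` and to extend them to disjoint consecutive `5`-sets: both are instances of
the fact that an even cycle is `(2m : m)`-choosable (for the extension, use the lists of
colours outside `A (i - 1) ∪ A i ∪ A (i + 1)`, which have at least `14 - 6 ≥ 2 · 3` elements).
That fact follows from the kernel method: orient the cycle by `i → i + 1`; every induced
subgraph has a kernel (evenness is needed only for the whole cycle), and handing out the
colours one at a time to a kernel of the still unfinished vertices whose list contains the
colour, every unfinished vertex loses colours only to its single out-neighbour, which takes at
most `m` of them.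
-/

open Finset

namespace EvenCycle

variable {n : ℕ} [NeZero n]

structure IsKernel (V K : Finset (ZMod n)) : Prop where
  subset : K ⊆ V
  succ_notMem : ∀ i ∈ K, i + 1 ∉ K
  succ_mem : ∀ i ∈ V, i ∉ K → i + 1 ∈ K

theorem isKernel_univ (hn : Even n) :
    IsKernel univ (univ.filter fun i : ZMod n => ZMod.castHom hn.two_dvd (ZMod 2) i = 0) := by
  set p := ZMod.castHom hn.two_dvd (ZMod 2)
  have hp : ∀ i, p (i + 1) = p i + 1 := fun i => by rw [map_add, map_one]
  refine ⟨filter_subset _ _, fun i hi => ?_, fun i _ hi => ?_⟩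
  · simp only [mem_filter, mem_univ, true_and] at hi ⊢
    rw [hp, hi]
    decide
  · simp only [mem_filter, mem_univ, true_and] at hi ⊢
    rw [hp]
    generalize p i = x at hi
    revert x
    decide

/-- Away from the whole cycle, keep the vertices of `V` lying at even distance before the end
of their run in `V`. -/
theorem exists_isKernel_of_notMem {V : Finset (ZMod n)} {j : ZMod n} (hj : j ∉ V) :
    ∃ K, IsKernel V K := by
  have hex : ∀ i : ZMod n, ∃ t : ℕ, i + ((t + 1 : ℕ) : ZMod n) ∉ V := fun i =>
    ⟨(j - i - 1).val, by rwa [Nat.cast_succ, ZMod.natCast_zmod_val, sub_add_cancel, add_sub_cancel]⟩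
  let d : ZMod n → ℕ := fun i => Nat.find (hex i)
  have hd_eq_zero : ∀ i, d i = 0 ↔ i + 1 ∉ V := fun i => by
    simp only [d, Nat.find_eq_zero, zero_add, Nat.cast_one]
  have hd_succ : ∀ i, i + 1 ∈ V → d i = d (i + 1) + 1 := fun i hi => by
    have hshift : ∀ t : ℕ, i + ((t + 1 + 1 : ℕ) : ZMod n) = i + 1 + ((t + 1 : ℕ) : ZMod n) :=
      fun t => by push_cast; ring
    have hex' : ∃ t : ℕ, i + ((t + 1 + 1 : ℕ) : ZMod n) ∉ V :=
      ⟨_, by rw [hshift]; exact Nat.find_spec (hex (i + 1))⟩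
    refine (Nat.find_comp_succ _ hex' (by simpa using hi)).trans ?_
    simp only [d, hshift]
  refine ⟨V.filter fun i => Even (d i), filter_subset _ _, fun i hi hi1 => ?_, fun i hi hiK => ?_⟩
  · rw [mem_filter] at hi hi1
    rw [hd_succ i hi1.1] at hi
    exact Nat.not_even_iff_odd.2 hi1.2.add_one hi.2
  · have hodd : ¬Even (d i) := fun h => hiK (mem_filter.2 ⟨hi, h⟩)
    have hi1 : i + 1 ∈ V := by
      by_contra h
      exact hodd ((hd_eq_zero i).2 h ▸ ⟨0, rfl⟩)
    rw [hd_succ i hi1, Nat.even_add_one, not_not] at hodd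
    exact mem_filter.2 ⟨hi1, hodd⟩

theorem exists_isKernel (hn : Even n) (V : Finset (ZMod n)) : ∃ K, IsKernel V K := by
  by_cases hV : V = univ
  · exact hV ▸ ⟨_, isKernel_univ hn⟩
  · obtain ⟨j, hj⟩ := not_forall.1 (mt eq_univ_iff_forall.2 hV)
    exact exists_isKernel_of_notMem hj

variable {α : Type*} [DecidableEq α]

/-- The state of the kernel method once the colours of `P` have been handed out. -/
structure IsPartialColoring (L : ZMod n → Finset α) (m : ℕ) (P : Finset α)
    (S : ZMod n → Finset α) : Prop where
  subset : ∀ i, S i ⊆ L i ∩ P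
  card_le : ∀ i, (S i).card ≤ m
  disjoint : ∀ i, Disjoint (S i) (S (i + 1))
  absorbed : ∀ i, (S i).card < m → L i ∩ P ⊆ S i ∪ S (i + 1)

theorem IsPartialColoring.insert {L : ZMod n → Finset α} {m : ℕ} {P : Finset α}
    {S : ZMod n → Finset α} {c : α} {K : Finset (ZMod n)} (hS : IsPartialColoring L m P S)
    (hc : c ∉ P) (hK : IsKernel (univ.filter fun i => c ∈ L i ∧ (S i).card < m) K) :
    IsPartialColoring L m (insert c P) fun i => if i ∈ K then insert c (S i) else S i := by
  have hK' : ∀ {i}, i ∈ K → c ∈ L i ∧ (S i).card < m := fun hi => by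
    simpa using hK.subset hi
  have hcS : ∀ i, c ∉ S i := fun i h => hc (mem_inter.1 (hS.subset i h)).2
  have hSP : ∀ i, S i ⊆ L i ∩ Insert.insert c P := fun i =>
    (hS.subset i).trans (inter_subset_inter_left (subset_insert _ _))
  have hmono : ∀ i, S i ⊆ if i ∈ K then Insert.insert c (S i) else S i := fun i => by
    split_ifs
    exacts [subset_insert _ _, subset_rfl]
  refine ⟨fun i => ?_, fun i => ?_, fun i => ?_, fun i hlt x hx => ?_⟩
  · split_ifs with hi
    · exact insert_subset (mem_inter.2 ⟨(hK' hi).1, mem_insert_self _ _⟩) (hSP i)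
    · exact hSP i
  · split_ifs with hi
    · exact (card_insert_le _ _).trans (hK' hi).2
    · exact hS.card_le i
  · have := hS.disjoint i
    split_ifs with hi hi1 hi1
    · exact absurd hi1 (hK.succ_notMem i hi)
    all_goals simp_all [disjoint_insert_left, disjoint_insert_right]
  · have hlt' : (S i).card < m := (card_le_card (hmono i)).trans_lt hlt
    rcases mem_insert.1 (mem_inter.1 hx).2 with rfl | hxP
    · by_cases hi : i ∈ K
      · simp [hi]
      · have := hK.succ_mem i (by simp [(mem_inter.1 hx).1, hlt']) hi
        simp [hi, this]
    · have := hS.absorbed i hlt' (mem_inter.2 ⟨(mem_inter.1 hx).1, hxP⟩)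
      exact union_subset_union (hmono i) (hmono (i + 1)) this

theorem exists_setColoring (hn : Even n) (L : ZMod n → Finset α) (m : ℕ)
    (hL : ∀ i, 2 * m ≤ (L i).card) :
    ∃ S : ZMod n → Finset α,
      (∀ i, S i ⊆ L i) ∧ (∀ i, (S i).card = m) ∧ ∀ i, Disjoint (S i) (S (i + 1)) := by
  have hpartial : ∀ P : Finset α, ∃ S, IsPartialColoring L m P S := by
    intro P
    induction P using Finset.induction_on with
    | empty => exact ⟨fun _ => ∅, by simp, by simp, by simp, by simp⟩
    | insert c P hc ih =>
      obtain ⟨S, hS⟩ := ih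
      obtain ⟨K, hK⟩ := exists_isKernel hn (univ.filter fun i => c ∈ L i ∧ (S i).card < m)
      exact ⟨_, hS.insert hc hK⟩
  obtain ⟨S, hS⟩ := hpartial (univ.biUnion L)
  have hLP : ∀ i, L i ∩ univ.biUnion L = L i := fun i =>
    inter_eq_left.2 (subset_biUnion_of_mem L (mem_univ i))
  refine ⟨S, fun i => hLP i ▸ hS.subset i, fun i => ?_, hS.disjoint⟩
  by_contra hne
  have hcover := hLP i ▸ hS.absorbed i (lt_of_le_of_ne (hS.card_le i) hne)
  have := (card_le_card hcover).trans (card_union_le _ _)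
  have := hS.card_le i
  have := hS.card_le (i + 1)
  have := hL i
  omega

theorem exists_setColoring_superset [Fintype α] (hn : Even n) {a b : ℕ}
    (hab : 3 * a + 2 * b ≤ Fintype.card α) (A : ZMod n → Finset α) (hA : ∀ i, (A i).card = a)
    (hAd : ∀ i, Disjoint (A i) (A (i + 1))) :
    ∃ f : ZMod n → Finset α,
      (∀ i, A i ⊆ f i) ∧ (∀ i, (f i).card = a + b) ∧ ∀ i, Disjoint (f i) (f (i + 1)) := by
  have hL : ∀ i, 2 * b ≤ (A (i - 1) ∪ A i ∪ A (i + 1))ᶜ.card := fun i => by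
    have h1 := card_union_le (A (i - 1) ∪ A i) (A (i + 1))
    have h2 := card_union_le (A (i - 1)) (A i)
    simp only [hA] at h1 h2
    rw [card_compl]
    omega
  obtain ⟨C, hCL, hC, hCd⟩ := exists_setColoring hn _ b hL
  have hCA : ∀ i, Disjoint (C i) (A (i - 1) ∪ A i ∪ A (i + 1)) := fun i =>
    disjoint_of_subset_left (hCL i) disjoint_compl_left
  refine ⟨fun i => A i ∪ C i, fun i => subset_union_left, fun i => ?_, fun i => ?_⟩
  · have := hCA i
    simp only [disjoint_union_right] at this
    rw [card_union_of_disjoint this.1.2.symm, hA, hC]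
  · have h1 := hCA i
    have h2 := hCA (i + 1)
    rw [add_sub_cancel_right] at h2
    simp only [disjoint_union_left, disjoint_union_right] at h1 h2 ⊢
    exact ⟨⟨hAd i, h1.2⟩, h2.1.1.symm, hCd i⟩

end EvenCycle

theorem cycle_with_leaves_avoiding_coloring_general (k : ℕ) (hk : 2 ≤ k)
    (Fv Fu : ZMod (2 * k) → Finset (Fin 14))
    (hFv : ∀ i, (Fv i).card ≤ 6 - 2 * 3)
    (hFu : ∀ i, (Fu i).card ≤ 6 - 2 * 1) :
    ∃ fv fu : ZMod (2 * k) → Finset (Fin 14),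
      (∀ i, (fv i).card = 5) ∧ (∀ i, (fu i).card = 7) ∧
      (∀ i, Disjoint (fv i) (Fv i)) ∧ (∀ i, Disjoint (fu i) (Fu i)) ∧
      (∀ i, Disjoint (fv i) (fv (i + 1))) ∧
      (∀ i, Disjoint (fv i) (fu i)) := by
  have : NeZero (2 * k) := ⟨by omega⟩
  choose U hFuU hU using fun i => exists_superset_card_eq (hFu i) (by simp)
  obtain ⟨A, hAU, hA, hAd⟩ := EvenCycle.exists_setColoring (even_two_mul k) U 2 (by simp [hU])
  obtain ⟨fv, hAfv, hfv, hfvd⟩ :=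
    EvenCycle.exists_setColoring_superset (even_two_mul k) (a := 2) (b := 3) (by simp) A hA hAd
  have hroom : ∀ i, 7 ≤ (fv i ∪ Fu i)ᶜ.card := fun i => by
    have h1 := card_le_card (union_subset_union_right (s := fv i) (hFuU i))
    have h2 := card_union_add_card_inter (fv i) (U i)
    have h3 := card_le_card (subset_inter (hAfv i) (hAU i))
    rw [hfv i, hU i] at h2
    rw [hA i] at h3
    rw [card_compl, Fintype.card_fin]
    omega
  choose fu hfu hfuc using fun i => exists_subset_card_eq (hroom i)
  have hfu : ∀ i, Disjoint (fu i) (fv i ∪ Fu i) := fun i =>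
    disjoint_of_subset_left (hfu i) disjoint_compl_left
  refine ⟨fv, fu, hfv, hfuc, fun i => ?_, fun i => ?_, hfvd, fun i => ?_⟩
  · rw [card_eq_zero.1 (Nat.le_zero.1 (hFv i))]
    exact disjoint_empty_right _
  · exact disjoint_of_subset_right subset_union_right (hfu i)
  · exact (disjoint_of_subset_right subset_union_left (hfu i)).symm

/-- Let `G` be obtained from an even cycle `v₀v₁...v_{2k-1}v₀` (`k ≥ 2`, vertices
indexed by `ZMod (2k)`) by attaching a pendant leaf `u_i` to each `v_i`. Each cycle
vertex has degree `3` and each leaf degree `1`. If `|F(v_i)| ≤ 6 − 2·3`,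
`|F(u_i)| ≤ 6 − 2·1` and `F(u_i) ∩ F(v_i) = ∅`, then there is an `F`-avoiding
coloring `f` with `|f(v_i)| = 8 − 3 = 5` and `|f(u_i)| = 8 − 1 = 7`. -/
theorem cycle_with_leaves_avoiding_coloring (k : ℕ) (hk : 2 ≤ k)
    (Fv Fu : ZMod (2 * k) → Finset (Fin 14))
    (hFv : ∀ i, (Fv i).card ≤ 6 - 2 * 3)
    (hFu : ∀ i, (Fu i).card ≤ 6 - 2 * 1)
    (hFdisj : ∀ i, Disjoint (Fu i) (Fv i)) :
    ∃ fv fu : ZMod (2 * k) → Finset (Fin 14),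
      (∀ i, (fv i).card = 5) ∧ (∀ i, (fu i).card = 7) ∧
      (∀ i, Disjoint (fv i) (Fv i)) ∧ (∀ i, Disjoint (fu i) (Fu i)) ∧
      (∀ i, Disjoint (fv i) (fv (i + 1))) ∧
      (∀ i, Disjoint (fv i) (fu i)) :=
  cycle_with_leaves_avoiding_coloring_general k hk Fv Fu hFv hFu
end

section
/- Let α + β = 3 and let G be the (α,β)-star, i.e., K_{1,3} with central vertex v in which β of its edges are subdivided once, so that v has α pendant leaf-neighbors and β neighbors that are internal vertices of subdivided edges, each subdivided branch being a path of length 2 from v. Then for every function F : V(G) → 2^{[14]} with |F(x)| ≤ 6 − 2deg(x) for all x and F(ℓ) ∩ F(s) = ∅ for every leaf ℓ and its neighbor s, there exists an F-avoiding coloring f of G with |f(x)| = 8 − deg(x) − 1_{x=v} for every vertex x. -/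
open Finset

namespace StarAvoid

lemma hit_of_mem {A fc : Finset (Fin 14)} (hA : A.card ≤ 4) {a : Fin 14}
    (ha : a ∈ A) (hafc : a ∈ fc) : (A \ fc).card ≤ 3 := by
  have h1 : A \ fc ⊆ A.erase a := by
    rw [Finset.subset_erase]
    exact ⟨Finset.sdiff_subset, by simp [hafc]⟩
  have h2 := Finset.card_le_card h1
  have h3 := Finset.card_erase_of_mem ha
  have h4 : 1 ≤ A.card := Finset.card_pos.mpr ⟨a, ha⟩
  omega

lemma key30 {A : Finset (Fin 14)} (hA : A.card ≤ 4) :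
    ∃ s : Finset (Fin 14), s.card ≤ 1 ∧ ∀ fc, s ⊆ fc → (A \ fc).card ≤ 3 := by
  classical
  by_cases h : A.Nonempty
  · exact ⟨{h.choose}, by simp, fun fc hs => hit_of_mem hA h.choose_spec (hs (by simp))⟩
  · rw [Finset.not_nonempty_iff_eq_empty] at h
    exact ⟨∅, by simp, fun fc _ => by simp [h]⟩

lemma univ14 : (Finset.univ : Finset (Fin 14)).card = 14 := by simp

lemma L30 (A0 A1 A2 : Finset (Fin 14)) (h0 : A0.card ≤ 4) (h1 : A1.card ≤ 4)
    (h2 : A2.card ≤ 4) :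
    ∃ fc : Finset (Fin 14), fc.card = 4 ∧ (A0 \ fc).card ≤ 3 ∧ (A1 \ fc).card ≤ 3 ∧
      (A2 \ fc).card ≤ 3 := by
  classical
  obtain ⟨s0, hs0c, hs0⟩ := key30 h0
  obtain ⟨s1, hs1c, hs1⟩ := key30 h1
  obtain ⟨s2, hs2c, hs2⟩ := key30 h2
  have hcard : (s0 ∪ s1 ∪ s2).card ≤ 4 := by
    have := Finset.card_union_le (s0 ∪ s1) s2
    have := Finset.card_union_le s0 s1
    omega
  obtain ⟨fc, hsub, _, hfc⟩ := Finset.exists_subsuperset_card_eq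
    (Finset.subset_univ (s0 ∪ s1 ∪ s2)) hcard (by rw [univ14]; omega)
  refine ⟨fc, hfc, hs0 fc ?_, hs1 fc ?_, hs2 fc ?_⟩
  · exact (Finset.subset_union_left.trans Finset.subset_union_left).trans hsub
  · exact (Finset.subset_union_right.trans Finset.subset_union_left).trans hsub
  · exact Finset.subset_union_right.trans hsub

lemma L21 (A0 A1 B : Finset (Fin 14)) (h0 : A0.card ≤ 4) (h1 : A1.card ≤ 4)
    (hB : B.card ≤ 4) :
    ∃ fc : Finset (Fin 14), fc.card = 4 ∧ (A0 \ fc).card ≤ 3 ∧ (A1 \ fc).card ≤ 3 ∧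
      (fc ∩ B).card ≤ 1 := by
  classical
  by_cases hBne : B.Nonempty
  · have key : ∀ A : Finset (Fin 14), A.card ≤ 4 → ∃ s : Finset (Fin 14), s.card ≤ 1 ∧
        s ∩ B ⊆ {hBne.choose} ∧ ∀ fc, s ⊆ fc → (A \ fc).card ≤ 3 := by
      intro A hA
      by_cases hA4 : A.card = 4
      · by_cases h : (A \ B).Nonempty
        · refine ⟨{h.choose}, by simp, ?_, fun fc hs =>
            hit_of_mem hA (Finset.sdiff_subset h.choose_spec) (hs (by simp))⟩
          have hcs := h.choose_spec
          intro x hx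
          rw [Finset.mem_inter, Finset.mem_singleton] at hx
          obtain ⟨rfl, hxB⟩ := hx
          exact absurd hxB (Finset.mem_sdiff.mp hcs).2
        · have hsub : A ⊆ B := by
            intro x hx
            by_contra hxB
            exact h ⟨x, Finset.mem_sdiff.mpr ⟨hx, hxB⟩⟩
          have hAB : A = B := Finset.eq_of_subset_of_card_le hsub (by omega)
          exact ⟨{hBne.choose}, by simp, Finset.inter_subset_left,
            fun fc hs => hit_of_mem hA (show hBne.choose ∈ A from hAB ▸ hBne.choose_spec)
              (hs (Finset.mem_singleton_self _))⟩
      · exact ⟨∅, by simp, by simp, fun fc _ =>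
          le_trans (Finset.card_le_card Finset.sdiff_subset) (by omega)⟩
    obtain ⟨s0, hs0c, hs0B, hs0⟩ := key A0 h0
    obtain ⟨s1, hs1c, hs1B, hs1⟩ := key A1 h1
    have hcard2 : (s0 ∪ s1).card ≤ 4 := by
      have := Finset.card_union_le s0 s1; omega
    have hbig : 4 ≤ ((s0 ∪ s1) ∪ Bᶜ).card := by
      have h1' : Bᶜ.card = 14 - B.card := by rw [Finset.card_compl, Fintype.card_fin]
      have := Finset.card_le_card (Finset.subset_union_right (s₁ := s0 ∪ s1) (s₂ := Bᶜ))
      omega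
    obtain ⟨fc, hsub1, hsub2, hfc⟩ := Finset.exists_subsuperset_card_eq
      (Finset.subset_union_left (s₁ := s0 ∪ s1) (s₂ := Bᶜ)) hcard2 hbig
    refine ⟨fc, hfc, hs0 fc (Finset.subset_union_left.trans hsub1),
      hs1 fc (Finset.subset_union_right.trans hsub1), ?_⟩
    have hfcB : fc ∩ B ⊆ {hBne.choose} := by
      intro x hx
      obtain ⟨hxfc, hxB⟩ := Finset.mem_inter.mp hx
      rcases Finset.mem_union.mp (hsub2 hxfc) with h | h
      · rcases Finset.mem_union.mp h with h | h
        · exact hs0B (Finset.mem_inter.mpr ⟨h, hxB⟩)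
        · exact hs1B (Finset.mem_inter.mpr ⟨h, hxB⟩)
      · exact absurd hxB (Finset.mem_compl.mp h)
    exact le_trans (Finset.card_le_card hfcB) (by simp)
  · rw [Finset.not_nonempty_iff_eq_empty] at hBne
    obtain ⟨fc, hc, ha0, ha1, _⟩ := L30 A0 A1 ∅ h0 h1 (by simp)
    exact ⟨fc, hc, ha0, ha1, by simp [hBne]⟩

lemma L12 (A B0 B1 : Finset (Fin 14)) (hA : A.card ≤ 4) (hB0 : B0.card ≤ 4)
    (hB1 : B1.card ≤ 4) :
    ∃ fc : Finset (Fin 14), fc.card = 4 ∧ (A \ fc).card ≤ 3 ∧ (fc ∩ B0).card ≤ 1 ∧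
      (fc ∩ B1).card ≤ 1 := by
  classical
  have hUc : (B0 ∪ B1)ᶜ.card = 14 - (B0 ∪ B1).card := by
    rw [Finset.card_compl, Fintype.card_fin]
  have hU : (B0 ∪ B1).card ≤ 8 := by
    have := Finset.card_union_le B0 B1; omega
  by_cases hAne : A.Nonempty
  · have hbig : 4 ≤ ({hAne.choose} ∪ (B0 ∪ B1)ᶜ).card := by
      have := Finset.card_le_card
        (Finset.subset_union_right (s₁ := ({hAne.choose} : Finset (Fin 14))) (s₂ := (B0 ∪ B1)ᶜ))
      omega
    obtain ⟨fc, hsub1, hsub2, hfc⟩ := Finset.exists_subsuperset_card_eq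
      (Finset.subset_union_left (s₁ := ({hAne.choose} : Finset (Fin 14))) (s₂ := (B0 ∪ B1)ᶜ))
      (by simp) hbig
    have hkey : ∀ B' : Finset (Fin 14), B' ⊆ B0 ∪ B1 → (fc ∩ B').card ≤ 1 := by
      intro B' hB'
      have : fc ∩ B' ⊆ {hAne.choose} := by
        intro x hx
        obtain ⟨hxfc, hxB⟩ := Finset.mem_inter.mp hx
        rcases Finset.mem_union.mp (hsub2 hxfc) with h | h
        · exact h
        · exact absurd (hB' hxB) (Finset.mem_compl.mp h)
      exact le_trans (Finset.card_le_card this) (by simp)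
    exact ⟨fc, hfc, hit_of_mem hA hAne.choose_spec (hsub1 (by simp)),
      hkey B0 Finset.subset_union_left, hkey B1 Finset.subset_union_right⟩
  · rw [Finset.not_nonempty_iff_eq_empty] at hAne
    obtain ⟨fc, hsub, hfc⟩ := Finset.exists_subset_card_eq
      (show 4 ≤ (B0 ∪ B1)ᶜ.card by omega)
    have hkey : ∀ B' : Finset (Fin 14), B' ⊆ B0 ∪ B1 → (fc ∩ B').card ≤ 1 := by
      intro B' hB'
      have : fc ∩ B' = ∅ := by
        rw [Finset.eq_empty_iff_forall_notMem]
        intro x hx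
        obtain ⟨hxfc, hxB⟩ := Finset.mem_inter.mp hx
        exact (Finset.mem_compl.mp (hsub hxfc)) (hB' hxB)
      simp [this]
    exact ⟨fc, hfc, by simp [hAne], hkey B0 Finset.subset_union_left,
      hkey B1 Finset.subset_union_right⟩

lemma L03 (B0 B1 B2 : Finset (Fin 14)) (h0 : B0.card ≤ 4) (h1 : B1.card ≤ 4)
    (h2 : B2.card ≤ 4) :
    ∃ fc : Finset (Fin 14), fc.card = 4 ∧ (fc ∩ B0).card ≤ 1 ∧ (fc ∩ B1).card ≤ 1 ∧
      (fc ∩ B2).card ≤ 1 := by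
  classical
  have easy : ∀ U : Finset (Fin 14), U.card ≤ 10 → B0 ⊆ U → B1 ⊆ U → B2 ⊆ U →
      ∃ fc : Finset (Fin 14), fc.card = 4 ∧ (fc ∩ B0).card ≤ 1 ∧ (fc ∩ B1).card ≤ 1 ∧
        (fc ∩ B2).card ≤ 1 := by
    intro U hU hb0 hb1 hb2
    have hUc : Uᶜ.card = 14 - U.card := by rw [Finset.card_compl, Fintype.card_fin]
    obtain ⟨fc, hsub, hfc⟩ := Finset.exists_subset_card_eq (show 4 ≤ Uᶜ.card by omega)
    have hkey : ∀ B' : Finset (Fin 14), B' ⊆ U → (fc ∩ B').card ≤ 1 := by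
      intro B' hB'
      have : fc ∩ B' = ∅ := by
        rw [Finset.eq_empty_iff_forall_notMem]
        intro x hx
        obtain ⟨hxfc, hxB⟩ := Finset.mem_inter.mp hx
        exact (Finset.mem_compl.mp (hsub hxfc)) (hB' hxB)
      simp [this]
    exact ⟨fc, hfc, hkey B0 hb0, hkey B1 hb1, hkey B2 hb2⟩
  by_cases hc0 : (B0 \ (B1 ∪ B2)).Nonempty
  · by_cases hc1 : (B1 \ (B0 ∪ B2)).Nonempty
    · by_cases hc2 : (B2 \ (B0 ∪ B1)).Nonempty
      · -- all exclusive parts nonempty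
        obtain ⟨e0, he0⟩ := hc0
        obtain ⟨e1, he1⟩ := hc1
        obtain ⟨e2, he2⟩ := hc2
        rw [Finset.mem_sdiff, Finset.mem_union] at he0 he1 he2
        push_neg at he0 he1 he2
        obtain ⟨he00, he01, he02⟩ := he0
        obtain ⟨he11, he10, he12⟩ := he1
        obtain ⟨he22, he20, he21⟩ := he2
        -- e0 ∈ B0, ∉ B1, ∉ B2 ; e1 ∈ B1, ∉ B0, ∉ B2 ; e2 ∈ B2, ∉ B0, ∉ B1
        have hUcard : (B0 ∪ B1 ∪ B2).card ≤ 12 := by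
          have := Finset.card_union_le (B0 ∪ B1) B2
          have := Finset.card_union_le B0 B1
          omega
        have hcompl : ((B0 ∪ B1 ∪ B2)ᶜ).Nonempty := by
          rw [← Finset.card_pos, Finset.card_compl, Fintype.card_fin]
          omega
        obtain ⟨e3, he3⟩ := hcompl
        rw [Finset.mem_compl, Finset.mem_union, Finset.mem_union] at he3
        push_neg at he3
        obtain ⟨⟨he30, he31⟩, he32⟩ := he3
        refine ⟨{e0, e1, e2, e3}, ?_, ?_, ?_, ?_⟩
        · rw [Finset.card_insert_of_notMem, Finset.card_insert_of_notMem,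
            Finset.card_insert_of_notMem, Finset.card_singleton]
          · simp only [Finset.mem_singleton]
            intro h; subst h; exact he32 he22
          · simp only [Finset.mem_insert, Finset.mem_singleton]
            rintro (h | h) <;> subst h
            · exact he12 he22
            · exact he31 he11
          · simp only [Finset.mem_insert, Finset.mem_singleton]
            rintro (h | h | h) <;> subst h
            · exact he01 he11
            · exact he02 he22
            · exact he30 he00
        · have hs : ({e0, e1, e2, e3} : Finset (Fin 14)) ∩ B0 ⊆ {e0} := by
            intro x hx
            obtain ⟨hxfc, hxB⟩ := Finset.mem_inter.mp hx
            simp only [Finset.mem_insert, Finset.mem_singleton] at hxfc ⊢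
            rcases hxfc with rfl | rfl | rfl | rfl
            · rfl
            · exact absurd hxB he10
            · exact absurd hxB he20
            · exact absurd hxB he30
          simpa using Finset.card_le_card hs
        · have hs : ({e0, e1, e2, e3} : Finset (Fin 14)) ∩ B1 ⊆ {e1} := by
            intro x hx
            obtain ⟨hxfc, hxB⟩ := Finset.mem_inter.mp hx
            simp only [Finset.mem_insert, Finset.mem_singleton] at hxfc ⊢
            rcases hxfc with rfl | rfl | rfl | rfl
            · exact absurd hxB he01
            · rfl
            · exact absurd hxB he21
            · exact absurd hxB he31
          simpa using Finset.card_le_card hs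
        · have hs : ({e0, e1, e2, e3} : Finset (Fin 14)) ∩ B2 ⊆ {e2} := by
            intro x hx
            obtain ⟨hxfc, hxB⟩ := Finset.mem_inter.mp hx
            simp only [Finset.mem_insert, Finset.mem_singleton] at hxfc ⊢
            rcases hxfc with rfl | rfl | rfl | rfl
            · exact absurd hxB he02
            · exact absurd hxB he12
            · rfl
            · exact absurd hxB he32
          simpa using Finset.card_le_card hs
      · rw [Finset.not_nonempty_iff_eq_empty, Finset.sdiff_eq_empty_iff_subset] at hc2
        refine easy (B0 ∪ B1) ?_ Finset.subset_union_left Finset.subset_union_right hc2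
        have := Finset.card_union_le B0 B1; omega
    · rw [Finset.not_nonempty_iff_eq_empty, Finset.sdiff_eq_empty_iff_subset] at hc1
      refine easy (B0 ∪ B2) ?_ Finset.subset_union_left hc1 Finset.subset_union_right
      have := Finset.card_union_le B0 B2; omega
  · rw [Finset.not_nonempty_iff_eq_empty, Finset.sdiff_eq_empty_iff_subset] at hc0
    refine easy (B1 ∪ B2) ?_ hc0 Finset.subset_union_left Finset.subset_union_right
    have := Finset.card_union_le B1 B2; omega

lemma choose_fc (α β : ℕ) (hαβ : α + β = 3) (A : Fin α → Finset (Fin 14))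
    (B : Fin β → Finset (Fin 14)) (hA : ∀ i, (A i).card ≤ 4) (hB : ∀ j, (B j).card ≤ 4) :
    ∃ fc : Finset (Fin 14), fc.card = 4 ∧ (∀ i, (A i \ fc).card ≤ 3) ∧
      (∀ j, (fc ∩ B j).card ≤ 1) := by
  have hα3 : α ≤ 3 := by omega
  interval_cases α
  · obtain rfl : β = 3 := by omega
    obtain ⟨fc, hc, hb0, hb1, hb2⟩ := L03 (B 0) (B 1) (B 2) (hB 0) (hB 1) (hB 2)
    exact ⟨fc, hc, fun i => i.elim0, fun j => by fin_cases j <;> assumption⟩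
  · obtain rfl : β = 2 := by omega
    obtain ⟨fc, hc, ha0, hb0, hb1⟩ := L12 (A 0) (B 0) (B 1) (hA 0) (hB 0) (hB 1)
    exact ⟨fc, hc, fun i => by fin_cases i <;> assumption,
      fun j => by fin_cases j <;> assumption⟩
  · obtain rfl : β = 1 := by omega
    obtain ⟨fc, hc, ha0, ha1, hb0⟩ := L21 (A 0) (A 1) (B 0) (hA 0) (hA 1) (hB 0)
    exact ⟨fc, hc, fun i => by fin_cases i <;> assumption,
      fun j => by fin_cases j <;> assumption⟩
  · obtain rfl : β = 0 := by omega
    obtain ⟨fc, hc, ha0, ha1, ha2⟩ := L30 (A 0) (A 1) (A 2) (hA 0) (hA 1) (hA 2)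
    exact ⟨fc, hc, fun i => by fin_cases i <;> assumption, fun j => j.elim0⟩

lemma build (α β : ℕ) (Fx : Fin α → Finset (Fin 14)) (Fy Ft : Fin β → Finset (Fin 14))
    (hFy : ∀ j, (Fy j).card ≤ 2) (hFt : ∀ j, (Ft j).card ≤ 4)
    (hleaft : ∀ j, Disjoint (Ft j) (Fy j))
    (fc : Finset (Fin 14)) (hfc : fc.card = 4)
    (hhit : ∀ i, (Fx i \ fc).card ≤ 3) (hbb : ∀ j, (fc ∩ Ft j).card ≤ 1) :
    ∃ (fx : Fin α → Finset (Fin 14)) (fy ft : Fin β → Finset (Fin 14)),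
      (∀ i, (fx i).card = 7) ∧ (∀ j, (fy j).card = 6) ∧ (∀ j, (ft j).card = 7) ∧
      (∀ i, Disjoint (fx i) (Fx i)) ∧ (∀ j, Disjoint (fy j) (Fy j)) ∧
      (∀ j, Disjoint (ft j) (Ft j)) ∧ (∀ i, Disjoint fc (fx i)) ∧
      (∀ j, Disjoint fc (fy j)) ∧ (∀ j, Disjoint (fy j) (ft j)) := by
  classical
  have gdisj : ∀ s t u : Finset (Fin 14), s ⊆ (t ∪ u)ᶜ → Disjoint s t ∧ Disjoint s u := by
    intro s t u h
    constructor <;> rw [Finset.disjoint_left] <;> intro x hxs hxt <;>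
      exact (Finset.mem_compl.mp (h hxs)) (by simp [hxt])
  have hx : ∀ i, ∃ s, s ⊆ (fc ∪ Fx i)ᶜ ∧ s.card = 7 := by
    intro i
    apply Finset.exists_subset_card_eq
    rw [Finset.card_compl, Fintype.card_fin]
    have h1 := Finset.card_sdiff_add_card (Fx i) fc
    have h2 : (fc ∪ Fx i).card = (Fx i ∪ fc).card := by rw [Finset.union_comm]
    have := hhit i
    omega
  choose fx hfx1 hfx2 using hx
  have hy : ∀ j, ∃ s, Ft j \ fc ⊆ s ∧ s ⊆ (Fy j ∪ fc)ᶜ ∧ s.card = 6 := by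
    intro j
    apply Finset.exists_subsuperset_card_eq
    · intro x hx'
      obtain ⟨h1, h2⟩ := Finset.mem_sdiff.mp hx'
      rw [Finset.mem_compl, Finset.mem_union]
      push_neg
      exact ⟨fun hxy => (Finset.disjoint_left.mp (hleaft j)) h1 hxy, h2⟩
    · have := Finset.card_le_card (Finset.sdiff_subset (s := Ft j) (t := fc))
      have := hFt j
      omega
    · rw [Finset.card_compl, Fintype.card_fin]
      have := Finset.card_union_le (Fy j) fc
      have := hFy j
      omega
  choose fy hfy1 hfy2 hfy3 using hy
  have ht : ∀ j, ∃ s, s ⊆ (fy j ∪ Ft j)ᶜ ∧ s.card = 7 := by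
    intro j
    apply Finset.exists_subset_card_eq
    rw [Finset.card_compl, Fintype.card_fin]
    have hsub : Ft j \ fy j ⊆ fc ∩ Ft j := by
      intro x hx'
      obtain ⟨h1, h2⟩ := Finset.mem_sdiff.mp hx'
      rw [Finset.mem_inter]
      refine ⟨?_, h1⟩
      by_contra hxfc
      exact h2 (hfy1 j (Finset.mem_sdiff.mpr ⟨h1, hxfc⟩))
    have h1 : (Ft j \ fy j).card ≤ 1 := le_trans (Finset.card_le_card hsub) (hbb j)
    have h2 := Finset.card_sdiff_add_card (Ft j) (fy j)
    have h3 : (fy j ∪ Ft j).card = (Ft j ∪ fy j).card := by rw [Finset.union_comm]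
    have := hfy3 j
    omega
  choose ft hft1 hft2 using ht
  refine ⟨fx, fy, ft, hfx2, hfy3, hft2, ?_, ?_, ?_, ?_, ?_, ?_⟩
  · exact fun i => (gdisj _ _ _ (hfx1 i)).2
  · exact fun j => (gdisj _ _ _ (hfy2 j)).1
  · exact fun j => (gdisj _ _ _ (hft1 j)).2
  · exact fun i => ((gdisj _ _ _ (hfx1 i)).1).symm
  · exact fun j => ((gdisj _ _ _ (hfy2 j)).2).symm
  · exact fun j => ((gdisj _ _ _ (hft1 j)).1).symm

end StarAvoid

/-- Lemma on `(α,β)`-stars with `α + β = 3`: the graph obtained from `K_{1,3}` by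
subdividing `β` of its edges once, with central vertex `c` (degree `3`), pendant
leaves `x i` (`i : Fin α`) adjacent to `c`, subdivision vertices `y j` (`j : Fin β`,
degree `2`) adjacent to `c`, and tip leaves `t j` adjacent to `y j`. Given `F` with
`|F(w)| ≤ 6 − 2 deg(w)` for all `w`, and `F(ℓ) ∩ F(s) = ∅` for every leaf `ℓ` and its
neighbor `s`, there is an `F`-avoiding coloring `f` with
`|f(w)| = 8 − deg(w) − 1_{w = c}` for every vertex `w`. -/
theorem star_avoiding_coloring (α β : ℕ) (hαβ : α + β = 3)
    (Fc : Finset (Fin 14)) (Fx : Fin α → Finset (Fin 14))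
    (Fy Ft : Fin β → Finset (Fin 14))
    (hFc : Fc.card ≤ 6 - 2 * 3)
    (hFx : ∀ i, (Fx i).card ≤ 6 - 2 * 1)
    (hFy : ∀ j, (Fy j).card ≤ 6 - 2 * 2)
    (hFt : ∀ j, (Ft j).card ≤ 6 - 2 * 1)
    (hleafx : ∀ i, Disjoint (Fx i) Fc)
    (hleaft : ∀ j, Disjoint (Ft j) (Fy j)) :
    ∃ (fc : Finset (Fin 14)) (fx : Fin α → Finset (Fin 14))
      (fy ft : Fin β → Finset (Fin 14)),
      fc.card = 8 - 3 - 1 ∧ (∀ i, (fx i).card = 8 - 1) ∧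
      (∀ j, (fy j).card = 8 - 2) ∧ (∀ j, (ft j).card = 8 - 1) ∧
      Disjoint fc Fc ∧ (∀ i, Disjoint (fx i) (Fx i)) ∧
      (∀ j, Disjoint (fy j) (Fy j)) ∧ (∀ j, Disjoint (ft j) (Ft j)) ∧
      (∀ i, Disjoint fc (fx i)) ∧ (∀ j, Disjoint fc (fy j)) ∧
      (∀ j, Disjoint (fy j) (ft j)) := by
  have hFc0 : Fc = ∅ := by
    rw [← Finset.card_eq_zero]
    omega
  obtain ⟨fc, hfc, hhit, hbb⟩ := StarAvoid.choose_fc α β hαβ Fx Ft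
    (fun i => by have := hFx i; omega) (fun j => by have := hFt j; omega)
  obtain ⟨fx, fy, ft, h1, h2, h3, h4, h5, h6, h7, h8, h9⟩ := StarAvoid.build α β Fx Fy Ft
    (fun j => by have := hFy j; omega) (fun j => by have := hFt j; omega)
    hleaft fc hfc hhit hbb
  exact ⟨fc, fx, fy, ft, by omega, h1, h2, h3, by simp [hFc0], h4, h5, h6, h7, h8, h9⟩
end
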